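/- arXiv:2108.10961 — 6 statements merged into one kernel-verified Lean document; each statement's English description precedes it below -/
import Mathlib

section
/- Let π be a probability measure on R^m × R^n with finite fourth moments whose marginals have covariance matrices Σμ (on R^m) and Σν (on R^n), both with zero means, and let K_{μν} be the m×n cross-covariance matrix of a pair (X,Y) with law π. If (X,Y) and (X′,Y′) are i.i.d. with law π, then E[(⟨X,X′⟩ − ⟨Y,Y′⟩)²] = tr(Σμ²) + tr(Σν²) − 2 tr(K_{μν}ᵀ K_{μν}). -/
open MeasureTheory Matrix ENNReal

private lemma sq_le_one_add_pow4 {x : ℝ} (hx : 0 ≤ x) : x ^ 2 ≤ 1 + x ^ 4 := by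
  nlinarith [sq_nonneg (x ^ 2 - 1), sq_nonneg x]

private lemma integrable_mul_aux {m n : ℕ} (γ : Measure ((Fin m → ℝ) × (Fin n → ℝ)))
    [IsProbabilityMeasure γ]
    (hmom : Integrable (fun p : (Fin m → ℝ) × (Fin n → ℝ) => (‖p.1‖ + ‖p.2‖) ^ 4) γ)
    (f g : (Fin m → ℝ) × (Fin n → ℝ) → ℝ) (hf : Measurable f) (hg : Measurable g)
    (hfb : ∀ p, |f p| ≤ ‖p.1‖ + ‖p.2‖) (hgb : ∀ p, |g p| ≤ ‖p.1‖ + ‖p.2‖) :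
    Integrable (fun p => f p * g p) γ := by
  have hint : Integrable (fun p : (Fin m → ℝ) × (Fin n → ℝ) => 1 + (‖p.1‖ + ‖p.2‖) ^ 4) γ :=
    (integrable_const 1).add hmom
  refine hint.mono ((hf.mul hg).aestronglyMeasurable) (Filter.Eventually.of_forall fun p => ?_)
  have hx : (0:ℝ) ≤ ‖p.1‖ + ‖p.2‖ := by positivity
  have h1 := hfb p
  have h2 := hgb p
  have ha := abs_nonneg (f p)
  have hb := abs_nonneg (g p)
  rw [Real.norm_eq_abs, abs_mul, Real.norm_eq_abs,
    abs_of_nonneg (show (0:ℝ) ≤ 1 + (‖p.1‖ + ‖p.2‖) ^ 4 by positivity)]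
  have hsq : |f p| * |g p| ≤ (‖p.1‖ + ‖p.2‖) ^ 2 := by nlinarith
  have := sq_le_one_add_pow4 hx
  linarith

/-- For a zero-mean probability measure `γ` on `ℝ^m × ℝ^n` with finite fourth
moments, covariance matrices `Sμ`, `Sν` and cross-covariance `K`,
`E[(⟨X,X'⟩ - ⟨Y,Y'⟩)²] = tr(Sμ²) + tr(Sν²) - 2 tr(Kᵀ K)` where `(X,Y), (X',Y')` are
i.i.d. with law `γ`. -/
theorem expectation_inner_product_diff_sq
    (m n : ℕ) (γ : Measure ((Fin m → ℝ) × (Fin n → ℝ))) [IsProbabilityMeasure γ]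
    (Sμ : Matrix (Fin m) (Fin m) ℝ) (Sν : Matrix (Fin n) (Fin n) ℝ)
    (K : Matrix (Fin m) (Fin n) ℝ)
    (hmom : Integrable (fun p : (Fin m → ℝ) × (Fin n → ℝ) => (‖p.1‖ + ‖p.2‖) ^ 4) γ)
    (hmeanX : ∀ i, ∫ p, p.1 i ∂γ = 0)
    (hmeanY : ∀ j, ∫ p, p.2 j ∂γ = 0)
    (hSμ : ∀ i i', Sμ i i' = ∫ p, p.1 i * p.1 i' ∂γ)
    (hSν : ∀ j j', Sν j j' = ∫ p, p.2 j * p.2 j' ∂γ)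
    (hK : ∀ i j, K i j = ∫ p, p.1 i * p.2 j ∂γ) :
    ∫ p, ∫ q, ((p.1 ⬝ᵥ q.1) - (p.2 ⬝ᵥ q.2)) ^ 2 ∂γ ∂γ
      = Matrix.trace (Sμ * Sμ) + Matrix.trace (Sν * Sν) - 2 * Matrix.trace (Kᵀ * K) := by
  classical
  have mX : ∀ i : Fin m, Measurable (fun p : (Fin m → ℝ) × (Fin n → ℝ) => p.1 i) :=
    fun i => (measurable_pi_apply i).comp measurable_fst
  have mY : ∀ j : Fin n, Measurable (fun p : (Fin m → ℝ) × (Fin n → ℝ) => p.2 j) :=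
    fun j => (measurable_pi_apply j).comp measurable_snd
  have bX : ∀ (i : Fin m) (p : (Fin m → ℝ) × (Fin n → ℝ)), |p.1 i| ≤ ‖p.1‖ + ‖p.2‖ := by
    intro i p
    calc |p.1 i| ≤ ‖p.1‖ := by rw [← Real.norm_eq_abs]; exact norm_le_pi_norm p.1 i
      _ ≤ ‖p.1‖ + ‖p.2‖ := le_add_of_nonneg_right (norm_nonneg _)
  have bY : ∀ (j : Fin n) (p : (Fin m → ℝ) × (Fin n → ℝ)), |p.2 j| ≤ ‖p.1‖ + ‖p.2‖ := by
    intro j p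
    calc |p.2 j| ≤ ‖p.2‖ := by rw [← Real.norm_eq_abs]; exact norm_le_pi_norm p.2 j
      _ ≤ ‖p.1‖ + ‖p.2‖ := le_add_of_nonneg_left (norm_nonneg _)
  have hI11 : ∀ i i' : Fin m,
      Integrable (fun p : (Fin m → ℝ) × (Fin n → ℝ) => p.1 i * p.1 i') γ :=
    fun i i' => integrable_mul_aux γ hmom _ _ (mX i) (mX i') (bX i) (bX i')
  have hI12 : ∀ (i : Fin m) (j : Fin n),
      Integrable (fun p : (Fin m → ℝ) × (Fin n → ℝ) => p.1 i * p.2 j) γ :=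
    fun i j => integrable_mul_aux γ hmom _ _ (mX i) (mY j) (bX i) (bY j)
  have hI22 : ∀ j j' : Fin n,
      Integrable (fun p : (Fin m → ℝ) × (Fin n → ℝ) => p.2 j * p.2 j') γ :=
    fun j j' => integrable_mul_aux γ hmom _ _ (mY j) (mY j') (bY j) (bY j')
  -- symmetry of Sμ and Sν
  have hSμsymm : ∀ i i' : Fin m, Sμ i' i = Sμ i i' := by
    intro i i'
    rw [hSμ, hSμ]
    exact integral_congr_ae (Filter.Eventually.of_forall fun p => mul_comm _ _)
  have hSνsymm : ∀ j j' : Fin n, Sν j' j = Sν j j' := by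
    intro j j'
    rw [hSν, hSν]
    exact integral_congr_ae (Filter.Eventually.of_forall fun p => mul_comm _ _)
  -- the inner integral
  have inner_eq : ∀ p : (Fin m → ℝ) × (Fin n → ℝ),
      (∫ q, ((p.1 ⬝ᵥ q.1) - (p.2 ⬝ᵥ q.2)) ^ 2 ∂γ)
        = (∑ i, ∑ i', p.1 i * p.1 i' * Sμ i i')
          - 2 * (∑ i, ∑ j, p.1 i * p.2 j * K i j)
          + ∑ j, ∑ j', p.2 j * p.2 j' * Sν j j' := by
    intro p
    have expand : ∀ q : (Fin m → ℝ) × (Fin n → ℝ),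
        ((p.1 ⬝ᵥ q.1) - (p.2 ⬝ᵥ q.2)) ^ 2
          = (∑ i, ∑ i', p.1 i * p.1 i' * (q.1 i * q.1 i'))
            - 2 * (∑ i, ∑ j, p.1 i * p.2 j * (q.1 i * q.2 j))
            + ∑ j, ∑ j', p.2 j * p.2 j' * (q.2 j * q.2 j') := by
      intro q
      have h : ∀ a b : ℝ, (a - b) ^ 2 = a * a - 2 * (a * b) + b * b := fun a b => by ring
      have e1 : (∑ i, p.1 i * q.1 i) * (∑ i, p.1 i * q.1 i)
          = ∑ i, ∑ i', p.1 i * p.1 i' * (q.1 i * q.1 i') := by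
        rw [Finset.sum_mul_sum]
        exact Finset.sum_congr rfl fun i _ => Finset.sum_congr rfl fun i' _ => by ring
      have e2 : (∑ i, p.1 i * q.1 i) * (∑ j, p.2 j * q.2 j)
          = ∑ i, ∑ j, p.1 i * p.2 j * (q.1 i * q.2 j) := by
        rw [Finset.sum_mul_sum]
        exact Finset.sum_congr rfl fun i _ => Finset.sum_congr rfl fun j _ => by ring
      have e3 : (∑ j, p.2 j * q.2 j) * (∑ j, p.2 j * q.2 j)
          = ∑ j, ∑ j', p.2 j * p.2 j' * (q.2 j * q.2 j') := by
        rw [Finset.sum_mul_sum]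
        exact Finset.sum_congr rfl fun j _ => Finset.sum_congr rfl fun j' _ => by ring
      simp only [dotProduct]
      rw [h, e1, e2, e3]
    have hIq1 : ∀ i i' : Fin m,
        Integrable (fun q : (Fin m → ℝ) × (Fin n → ℝ) => p.1 i * p.1 i' * (q.1 i * q.1 i')) γ :=
      fun i i' => (hI11 i i').const_mul _
    have hIq2 : ∀ (i : Fin m) (j : Fin n),
        Integrable (fun q : (Fin m → ℝ) × (Fin n → ℝ) => p.1 i * p.2 j * (q.1 i * q.2 j)) γ :=
      fun i j => (hI12 i j).const_mul _
    have hIq3 : ∀ j j' : Fin n,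
        Integrable (fun q : (Fin m → ℝ) × (Fin n → ℝ) => p.2 j * p.2 j' * (q.2 j * q.2 j')) γ :=
      fun j j' => (hI22 j j').const_mul _
    have hA : Integrable
        (fun q : (Fin m → ℝ) × (Fin n → ℝ) => ∑ i, ∑ i', p.1 i * p.1 i' * (q.1 i * q.1 i')) γ :=
      integrable_finset_sum _ fun i _ => integrable_finset_sum _ fun i' _ => hIq1 i i'
    have hB : Integrable
        (fun q : (Fin m → ℝ) × (Fin n → ℝ) => ∑ i, ∑ j, p.1 i * p.2 j * (q.1 i * q.2 j)) γ :=
      integrable_finset_sum _ fun i _ => integrable_finset_sum _ fun j _ => hIq2 i j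
    have hC : Integrable
        (fun q : (Fin m → ℝ) × (Fin n → ℝ) => ∑ j, ∑ j', p.2 j * p.2 j' * (q.2 j * q.2 j')) γ :=
      integrable_finset_sum _ fun j _ => integrable_finset_sum _ fun j' _ => hIq3 j j'
    have eA : (∫ q, ∑ i, ∑ i', p.1 i * p.1 i' * (q.1 i * q.1 i') ∂γ)
        = ∑ i, ∑ i', p.1 i * p.1 i' * Sμ i i' := by
      rw [integral_finset_sum _ fun i _ => integrable_finset_sum _ fun i' _ => hIq1 i i']
      refine Finset.sum_congr rfl fun i _ => ?_
      rw [integral_finset_sum _ fun i' _ => hIq1 i i']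
      refine Finset.sum_congr rfl fun i' _ => ?_
      rw [integral_const_mul, ← hSμ i i']
    have eB : (∫ q, ∑ i, ∑ j, p.1 i * p.2 j * (q.1 i * q.2 j) ∂γ)
        = ∑ i, ∑ j, p.1 i * p.2 j * K i j := by
      rw [integral_finset_sum _ fun i _ => integrable_finset_sum _ fun j _ => hIq2 i j]
      refine Finset.sum_congr rfl fun i _ => ?_
      rw [integral_finset_sum _ fun j _ => hIq2 i j]
      refine Finset.sum_congr rfl fun j _ => ?_
      rw [integral_const_mul, ← hK i j]
    have eC : (∫ q, ∑ j, ∑ j', p.2 j * p.2 j' * (q.2 j * q.2 j') ∂γ)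
        = ∑ j, ∑ j', p.2 j * p.2 j' * Sν j j' := by
      rw [integral_finset_sum _ fun j _ => integrable_finset_sum _ fun j' _ => hIq3 j j']
      refine Finset.sum_congr rfl fun j _ => ?_
      rw [integral_finset_sum _ fun j' _ => hIq3 j j']
      refine Finset.sum_congr rfl fun j' _ => ?_
      rw [integral_const_mul, ← hSν j j']
    have k1 := integral_add (μ := γ)
      (f := fun q : (Fin m → ℝ) × (Fin n → ℝ) =>
        (∑ i, ∑ i', p.1 i * p.1 i' * (q.1 i * q.1 i'))
          - 2 * ∑ i, ∑ j, p.1 i * p.2 j * (q.1 i * q.2 j))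
      (g := fun q : (Fin m → ℝ) × (Fin n → ℝ) =>
        ∑ j, ∑ j', p.2 j * p.2 j' * (q.2 j * q.2 j'))
      (hA.sub (hB.const_mul 2)) hC
    have k2 := integral_sub (μ := γ)
      (f := fun q : (Fin m → ℝ) × (Fin n → ℝ) =>
        ∑ i, ∑ i', p.1 i * p.1 i' * (q.1 i * q.1 i'))
      (g := fun q : (Fin m → ℝ) × (Fin n → ℝ) =>
        2 * ∑ i, ∑ j, p.1 i * p.2 j * (q.1 i * q.2 j))
      hA (hB.const_mul 2)
    rw [integral_congr_ae (Filter.Eventually.of_forall expand), k1, k2,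
      integral_const_mul, eA, eB, eC]
  simp_rw [inner_eq]
  have hJ1 : Integrable
      (fun p : (Fin m → ℝ) × (Fin n → ℝ) => ∑ i, ∑ i', p.1 i * p.1 i' * Sμ i i') γ :=
    integrable_finset_sum _ fun i _ => integrable_finset_sum _ fun i' _ => (hI11 i i').mul_const _
  have hJ2 : Integrable
      (fun p : (Fin m → ℝ) × (Fin n → ℝ) => ∑ i, ∑ j, p.1 i * p.2 j * K i j) γ :=
    integrable_finset_sum _ fun i _ => integrable_finset_sum _ fun j _ => (hI12 i j).mul_const _
  have hJ3 : Integrable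
      (fun p : (Fin m → ℝ) × (Fin n → ℝ) => ∑ j, ∑ j', p.2 j * p.2 j' * Sν j j') γ :=
    integrable_finset_sum _ fun j _ => integrable_finset_sum _ fun j' _ => (hI22 j j').mul_const _
  have f1 : (∫ p, ∑ i, ∑ i', p.1 i * p.1 i' * Sμ i i' ∂γ) = Matrix.trace (Sμ * Sμ) := by
    rw [integral_finset_sum _ fun i _ =>
      integrable_finset_sum _ fun i' _ => (hI11 i i').mul_const (Sμ i i')]
    rw [Matrix.trace]
    simp only [Matrix.diag, Matrix.mul_apply]
    refine Finset.sum_congr rfl fun i _ => ?_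
    rw [integral_finset_sum _ fun i' _ => (hI11 i i').mul_const (Sμ i i')]
    refine Finset.sum_congr rfl fun i' _ => ?_
    rw [integral_mul_const, ← hSμ i i', hSμsymm i i']
  have f2 : (∫ p, ∑ i, ∑ j, p.1 i * p.2 j * K i j ∂γ) = Matrix.trace (Kᵀ * K) := by
    rw [integral_finset_sum _ fun i _ =>
      integrable_finset_sum _ fun j _ => (hI12 i j).mul_const (K i j)]
    have h2 : ∀ i : Fin m, (∫ p : (Fin m → ℝ) × (Fin n → ℝ),
        ∑ j, p.1 i * p.2 j * K i j ∂γ) = ∑ j, K i j * K i j := by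
      intro i
      rw [integral_finset_sum _ fun j _ => (hI12 i j).mul_const (K i j)]
      refine Finset.sum_congr rfl fun j _ => ?_
      rw [integral_mul_const, ← hK i j]
    simp_rw [h2]
    rw [Matrix.trace]
    simp only [Matrix.diag, Matrix.mul_apply, Matrix.transpose_apply]
    exact Finset.sum_comm
  have f3 : (∫ p, ∑ j, ∑ j', p.2 j * p.2 j' * Sν j j' ∂γ) = Matrix.trace (Sν * Sν) := by
    rw [integral_finset_sum _ fun j _ =>
      integrable_finset_sum _ fun j' _ => (hI22 j j').mul_const (Sν j j')]
    rw [Matrix.trace]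
    simp only [Matrix.diag, Matrix.mul_apply]
    refine Finset.sum_congr rfl fun j _ => ?_
    rw [integral_finset_sum _ fun j' _ => (hI22 j j').mul_const (Sν j j')]
    refine Finset.sum_congr rfl fun j' _ => ?_
    rw [integral_mul_const, ← hSν j j', hSνsymm j j']
  have k1 := integral_add (μ := γ)
    (f := fun p : (Fin m → ℝ) × (Fin n → ℝ) =>
      (∑ i, ∑ i', p.1 i * p.1 i' * Sμ i i') - 2 * ∑ i, ∑ j, p.1 i * p.2 j * K i j)
    (g := fun p : (Fin m → ℝ) × (Fin n → ℝ) => ∑ j, ∑ j', p.2 j * p.2 j' * Sν j j')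
    (hJ1.sub (hJ2.const_mul 2)) hJ3
  have k2 := integral_sub (μ := γ)
    (f := fun p : (Fin m → ℝ) × (Fin n → ℝ) => ∑ i, ∑ i', p.1 i * p.1 i' * Sμ i i')
    (g := fun p : (Fin m → ℝ) × (Fin n → ℝ) => 2 * ∑ i, ∑ j, p.1 i * p.2 j * K i j)
    hJ1 (hJ2.const_mul 2)
  rw [k1, k2, integral_const_mul, f1, f2, f3]
  ring
end

section
/- Let Σμ be an m×m positive definite matrix, Σν an n×n positive definite matrix, and K an m×n real matrix such that the (m+n)×(m+n) block matrix with diagonal blocks Σμ, Σν and off-diagonal blocks K, Kᵀ is positive semidefinite. Then every eigenvalue of the n×n matrix Σν^{-1/2} Kᵀ Σμ^{-1} K Σν^{-1/2} lies in the interval [0,1]. -/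
open Matrix

section OldSqrt

open scoped ComplexOrder

/-- The positive semidefinite square root of a positive semidefinite matrix, as defined in
Mathlib (December 2024) under the name `Matrix.PosSemidef.sqrt`, which has since been removed. -/
noncomputable def Matrix.PosSemidef.sqrt {n 𝕜 : Type*} [Fintype n] [RCLike 𝕜] [DecidableEq n]
    {A : Matrix n n 𝕜} (hA : A.PosSemidef) : Matrix n n 𝕜 :=
  (hA.1.eigenvectorUnitary : Matrix n n 𝕜) * diagonal ((↑) ∘ (√·) ∘ hA.1.eigenvalues) *
  (star hA.1.eigenvectorUnitary : Matrix n n 𝕜)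

end OldSqrt

/-- If `Sμ`, `Sν` are positive definite and the block matrix
`[[Sμ, K],[Kᵀ, Sν]]` is positive semidefinite, then every eigenvalue of
`Sν^{-1/2} Kᵀ Sμ⁻¹ K Sν^{-1/2}` lies in `[0,1]`, where `Sν^{-1/2}` is the inverse of the
positive semidefinite square root of `Sν`. -/
theorem eigenvalues_of_normalized_cross_covariance_mem_Icc
    (m n : ℕ)
    (Sμ : Matrix (Fin m) (Fin m) ℝ) (Sν : Matrix (Fin n) (Fin n) ℝ)
    (K : Matrix (Fin m) (Fin n) ℝ)
    (hSμ : Sμ.PosDef) (hSν : Sν.PosDef)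
    (hblock : (Matrix.fromBlocks Sμ K Kᵀ Sν).PosSemidef)
    (M : Matrix (Fin n) (Fin n) ℝ)
    (hMdef : M = (Matrix.PosSemidef.sqrt hSν.posSemidef)⁻¹ * Kᵀ * Sμ⁻¹ * K * (Matrix.PosSemidef.sqrt hSν.posSemidef)⁻¹)
    (hM : M.IsHermitian) :
    ∀ i, hM.eigenvalues i ∈ Set.Icc (0 : ℝ) 1 := by
  have hKT : Kᵀ = Kᴴ := (Matrix.conjTranspose_eq_transpose_of_trivial K).symm
  set S := Matrix.PosSemidef.sqrt hSν.posSemidef with hS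
  have hSherm : S.IsHermitian := by
    rw [hS, Matrix.PosSemidef.sqrt]
    simp [IsHermitian, conjTranspose_mul, diagonal_conjTranspose, Matrix.mul_assoc,
      Matrix.star_eq_conjTranspose, conjTranspose_eq_transpose_of_trivial]
  have hSS : S * S = Sν := by
    have hev := hSν.posSemidef.eigenvalues_nonneg
    have hU := Unitary.coe_star_mul_self hSν.posSemidef.1.eigenvectorUnitary
    conv_rhs => rw [hSν.posSemidef.1.spectral_theorem, Unitary.conjStarAlgAut_apply]
    rw [hS, Matrix.PosSemidef.sqrt]
    calc _ = (hSν.posSemidef.1.eigenvectorUnitary : Matrix (Fin n) (Fin n) ℝ) *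
          diagonal ((RCLike.ofReal : ℝ → ℝ) ∘ (√·) ∘ hSν.posSemidef.1.eigenvalues) *
          ((star hSν.posSemidef.1.eigenvectorUnitary : Matrix (Fin n) (Fin n) ℝ) *
            (hSν.posSemidef.1.eigenvectorUnitary : Matrix (Fin n) (Fin n) ℝ)) *
          diagonal ((RCLike.ofReal : ℝ → ℝ) ∘ (√·) ∘ hSν.posSemidef.1.eigenvalues) *
          (star hSν.posSemidef.1.eigenvectorUnitary : Matrix (Fin n) (Fin n) ℝ) := by
          simp only [Matrix.mul_assoc]
      _ = _ := by
          rw [hU]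
          simp only [Matrix.mul_one, Matrix.mul_assoc, diagonal_mul_diagonal]
          congr 3
          funext j
          simp [Real.mul_self_sqrt (hev j)]
  have hSdet : IsUnit S.det := by
    have h1 : S.det * S.det = Sν.det := by rw [← Matrix.det_mul, hSS]
    have h2 : Sν.det ≠ 0 := ne_of_gt hSν.det_pos
    refine isUnit_iff_ne_zero.mpr fun h => h2 ?_
    rw [← h1, h, mul_zero]
  have hSinvherm : (S⁻¹).IsHermitian := hSherm.inv
  -- M is (S⁻¹)ᴴ * N * S⁻¹ with N = Kᴴ Sμ⁻¹ K
  have hMrw : M = (S⁻¹)ᴴ * (Kᴴ * Sμ⁻¹ * K) * S⁻¹ := by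
    rw [hMdef, hSinvherm.eq, hKT]; simp only [Matrix.mul_assoc]
  have hNps : (Kᴴ * Sμ⁻¹ * K).PosSemidef :=
    hSμ.inv.posSemidef.conjTranspose_mul_mul_same K
  have hMps : M.PosSemidef := hMrw ▸ hNps.conjTranspose_mul_mul_same S⁻¹
  -- Schur complement
  haveI : Invertible Sμ := hSμ.isUnit.invertible
  have hschur : (Sν - Kᴴ * Sμ⁻¹ * K).PosSemidef := by
    rw [← Matrix.PosDef.fromBlocks₁₁ K Sν hSμ]
    rwa [← hKT]
  have h1M : (1 - M).PosSemidef := by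
    have : 1 - M = (S⁻¹)ᴴ * (Sν - (Kᴴ * Sμ⁻¹ * K)) * S⁻¹ := by
      rw [hMrw, hSinvherm.eq, Matrix.mul_sub, Matrix.sub_mul]
      congr 1
      rw [← hSS, ← Matrix.mul_assoc S⁻¹ S S, Matrix.nonsing_inv_mul S hSdet,
        Matrix.one_mul, Matrix.mul_nonsing_inv S hSdet]
    rw [this]
    exact hschur.conjTranspose_mul_mul_same S⁻¹
  intro i
  constructor
  · exact hMps.eigenvalues_nonneg i
  · -- use the eigenvector
    set v : Fin n → ℝ := ⇑(hM.eigenvectorBasis i) with hv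
    have hvv : dotProduct (star v) v = 1 := by
      have h1 : ‖hM.eigenvectorBasis i‖ = 1 := hM.eigenvectorBasis.orthonormal.1 i
      have h2 : (inner ℝ (hM.eigenvectorBasis i) (hM.eigenvectorBasis i) : ℝ) = 1 := by
        rw [real_inner_self_eq_norm_sq, h1]; norm_num
      rw [← h2, EuclideanSpace.inner_eq_star_dotProduct]; exact dotProduct_comm _ _
    have hMv : M *ᵥ v = hM.eigenvalues i • v := hM.mulVec_eigenvectorBasis i
    have := h1M.dotProduct_mulVec_nonneg v
    rw [Matrix.sub_mulVec, Matrix.one_mulVec, hMv, dotProduct_sub,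
      dotProduct_smul, hvv, smul_eq_mul, mul_one] at this
    linarith
end

section
/- Let α and β be finite positive measures on R^k with densities, with total masses m_α and m_β, such that α is absolutely continuous with respect to β and KL(α‖β) is finite. Then KL^⊗(α ‖ β) = 2 m_α · KL(α ‖ β) + (m_α − m_β)². -/
open MeasureTheory Matrix ENNReal

/-- Density (w.r.t. Lebesgue measure) of the centered Gaussian with covariance `S`. -/
noncomputable def gaussianPdf {ι : Type*} [Fintype ι] [DecidableEq ι]
    (S : Matrix ι ι ℝ) (x : ι → ℝ) : ℝ≥0∞ :=
  ENNReal.ofReal (Real.exp (-(x ⬝ᵥ (S⁻¹ *ᵥ x)) / 2) /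
    Real.sqrt ((2 * Real.pi) ^ (Fintype.card ι) * S.det))

/-- The centered Gaussian measure `N(0, S)` on `ι → ℝ` with covariance matrix `S`. -/
noncomputable def gaussianMeasure {ι : Type*} [Fintype ι] [DecidableEq ι]
    (S : Matrix ι ι ℝ) : Measure (ι → ℝ) :=
  MeasureTheory.volume.withDensity (gaussianPdf S)

/-- Generalized Kullback–Leibler divergence between positive measures:
`KL(α‖β) = ∫ log (dα/dβ) dα + β(univ) - α(univ)`.
For probability measures this is the usual Kullback–Leibler divergence. -/
noncomputable def KLgen {X : Type*} [MeasurableSpace X] (α β : Measure X) : ℝ :=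
  (∫ x, Real.log ((α.rnDeriv β x).toReal) ∂α) + (β Set.univ).toReal - (α Set.univ).toReal

/-- Product of withDensity measures. -/
lemma prod_withDensity_aux {X : Type*} [MeasurableSpace X] (α β : Measure X)
    [SigmaFinite α] [SigmaFinite β]
    {f : X → ℝ≥0∞} (hf : Measurable f) (hα : β.withDensity f = α) :
    α.prod α = (β.prod β).withDensity (fun p => f p.1 * f p.2) := by
  refine Measure.prod_eq fun s t hs ht => ?_
  rw [withDensity_apply _ (hs.prod ht), ← Measure.prod_restrict,
    MeasureTheory.lintegral_prod_mul hf.aemeasurable hf.aemeasurable,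
    ← hα, withDensity_apply _ hs, withDensity_apply _ ht]

/-- for finite positive measures `α ≪ β` on `ℝ^k` with densities and finite
KL divergence, the quadratic KL divergence `KL⊗(α‖β) := KL(α⊗α ‖ β⊗β)` satisfies
`KL⊗(α‖β) = 2 mα KL(α‖β) + (mα - mβ)²` where `mα, mβ` are the total masses. -/
theorem kl_tensor_square
    (k : ℕ) (α β : Measure (Fin k → ℝ))
    [IsFiniteMeasure α] [IsFiniteMeasure β]
    (hαd : α ≪ (MeasureTheory.volume : Measure (Fin k → ℝ)))
    (hβd : β ≪ (MeasureTheory.volume : Measure (Fin k → ℝ)))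
    (hαβ : α ≪ β)
    (hint : Integrable (fun x => Real.log ((α.rnDeriv β x).toReal)) α) :
    KLgen (α.prod α) (β.prod β)
      = 2 * (α Set.univ).toReal * KLgen α β
        + ((α Set.univ).toReal - (β Set.univ).toReal) ^ 2 := by
  set f : (Fin k → ℝ) → ℝ≥0∞ := α.rnDeriv β with hfdef
  have hf : Measurable f := α.measurable_rnDeriv β
  haveI : α.HaveLebesgueDecomposition β := Measure.haveLebesgueDecomposition_of_sigmaFinite α β
  have hα : β.withDensity f = α := Measure.withDensity_rnDeriv_eq α β hαβ
  have hprodeq : α.prod α = (β.prod β).withDensity (fun p => f p.1 * f p.2) := by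
    exact prod_withDensity_aux α β hf hα
  have hmeas2 : Measurable (fun p : (Fin k → ℝ) × (Fin k → ℝ) => f p.1 * f p.2) :=
    (hf.comp measurable_fst).mul (hf.comp measurable_snd)
  have hac : α.prod α ≪ β.prod β := hαβ.prod hαβ
  have hrnβ : (α.prod α).rnDeriv (β.prod β) =ᵐ[β.prod β] fun p => f p.1 * f p.2 := by
    rw [hprodeq]; exact Measure.rnDeriv_withDensity _ hmeas2
  have hrn : (α.prod α).rnDeriv (β.prod β) =ᵐ[α.prod α] fun p => f p.1 * f p.2 :=
    hac.ae_le hrnβ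
  -- a.e. positivity and finiteness of f
  have hP : ∀ᵐ x ∂α, 0 < f x ∧ f x < ∞ :=
    (Measure.rnDeriv_pos hαβ).and (hαβ.ae_le (Measure.rnDeriv_lt_top α β))
  have hP1 : ∀ᵐ p ∂α.prod α, 0 < f p.1 ∧ f p.1 < ∞ :=
    Measure.quasiMeasurePreserving_fst.ae hP
  have hP2 : ∀ᵐ p ∂α.prod α, 0 < f p.2 ∧ f p.2 < ∞ :=
    Measure.quasiMeasurePreserving_snd.ae hP
  set g : (Fin k → ℝ) → ℝ := fun x => Real.log ((f x).toReal) with hgdef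
  have hsplit : (fun p : (Fin k → ℝ) × (Fin k → ℝ) =>
      Real.log (((α.prod α).rnDeriv (β.prod β) p).toReal))
      =ᵐ[α.prod α] fun p => g p.1 + g p.2 := by
    filter_upwards [hrn, hP1, hP2] with p hp h1 h2
    rw [hp]
    simp only [ENNReal.toReal_mul]
    rw [Real.log_mul]
    · exact (ENNReal.toReal_pos h1.1.ne' h1.2.ne).ne'
    · exact (ENNReal.toReal_pos h2.1.ne' h2.2.ne).ne'
  have hg : Integrable g α := hint
  have hgmeas : StronglyMeasurable g :=
    ((ENNReal.measurable_toReal.comp hf).log).stronglyMeasurable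
  -- integrability of the two pieces
  have hmapfst : (α.prod α).map Prod.fst = α Set.univ • α := by
    rw [Measure.map_fst_prod]
  have hmapsnd : (α.prod α).map Prod.snd = α Set.univ • α := by
    rw [Measure.map_snd_prod]
  have hgsmul : Integrable g (α Set.univ • α) :=
    hg.smul_measure (measure_ne_top α _)
  have hint1 : Integrable (fun p : (Fin k → ℝ) × (Fin k → ℝ) => g p.1) (α.prod α) := by
    have := (integrable_map_measure (hgmeas.aestronglyMeasurable)
      measurable_fst.aemeasurable (μ := α.prod α)).mp (hmapfst ▸ hgsmul)
    exact this
  have hint2 : Integrable (fun p : (Fin k → ℝ) × (Fin k → ℝ) => g p.2) (α.prod α) := by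
    have := (integrable_map_measure (hgmeas.aestronglyMeasurable)
      measurable_snd.aemeasurable (μ := α.prod α)).mp (hmapsnd ▸ hgsmul)
    exact this
  have hI1 : ∫ p, g p.1 ∂(α.prod α) = (α Set.univ).toReal * ∫ x, g x ∂α := by
    rw [← integral_map measurable_fst.aemeasurable hgmeas.aestronglyMeasurable,
      hmapfst, integral_smul_measure, smul_eq_mul]
  have hI2 : ∫ p, g p.2 ∂(α.prod α) = (α Set.univ).toReal * ∫ x, g x ∂α := by
    rw [← integral_map measurable_snd.aemeasurable hgmeas.aestronglyMeasurable,
      hmapsnd, integral_smul_measure, smul_eq_mul]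
  have hIprod : (∫ p, Real.log (((α.prod α).rnDeriv (β.prod β) p).toReal) ∂(α.prod α))
      = 2 * (α Set.univ).toReal * ∫ x, g x ∂α := by
    rw [integral_congr_ae hsplit, integral_add hint1 hint2, hI1, hI2]; ring
  have hmassα : ((α.prod α) Set.univ).toReal = (α Set.univ).toReal * (α Set.univ).toReal := by
    rw [← Set.univ_prod_univ, Measure.prod_prod, ENNReal.toReal_mul]
  have hmassβ : ((β.prod β) Set.univ).toReal = (β Set.univ).toReal * (β Set.univ).toReal := by
    rw [← Set.univ_prod_univ, Measure.prod_prod, ENNReal.toReal_mul]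
  simp only [KLgen, hIprod, hmassα, hmassβ, hgdef, hfdef]
  ring
end

section
/- Let α and β be finite positive measures on R^k with densities and total masses m_α, m_β, with α absolutely continuous with respect to β and KL(α‖β) finite, and let t, r > 0. Then KL^⊗(t·α ‖ r·β) = t² · KL^⊗(α ‖ β) + t² log(t²/r²) · m_α² + (r² − t²) · m_β². -/
open MeasureTheory Matrix ENNReal

/-!
Product measures scale quadratically: `(t • α).prod (t • α) = t² • α.prod α`. So the identity is
the scaling law `KL(c • μ ‖ d • ν) = c KL(μ ‖ ν) + c log (c / d) m_μ + (d - c) m_ν`, applied with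
`c = t²`, `d = r²`; it holds because `d(c • μ)/d(d • ν) = (c / d) dμ/dν`. The law needs
`log d(α ⊗ α)/d(β ⊗ β)` to be `α ⊗ α`-integrable, which follows from the density of a product
measure being the product of the densities.
-/

namespace MeasureTheory

namespace Measure

variable {X Y : Type*} [MeasurableSpace X] [MeasurableSpace Y]

lemma toReal_rnDeriv_pos {μ ν : Measure X} [SigmaFinite μ] [SigmaFinite ν] (hμν : μ ≪ ν) :
    ∀ᵐ x ∂μ, 0 < (μ.rnDeriv ν x).toReal := by
  filter_upwards [rnDeriv_pos hμν, hμν.ae_le (rnDeriv_ne_top μ ν)] with x hpos htop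
  exact ENNReal.toReal_pos hpos.ne' htop

lemma rnDeriv_smul_smul {μ ν : Measure X} [SigmaFinite μ] [SigmaFinite ν]
    {a b : ℝ≥0∞} (ha : a ≠ ∞) (hb₀ : b ≠ 0) (hb : b ≠ ∞) :
    (a • μ).rnDeriv (b • ν) =ᵐ[ν] (a / b) • μ.rnDeriv ν := by
  have : SigmaFinite (b • ν) := by
    lift b to NNReal using hb
    exact SMul.sigmaFinite b
  have hleft : (a • μ).rnDeriv (b • ν) =ᵐ[ν] a • μ.rnDeriv (b • ν) :=
    (ae_ennreal_smul_measure_iff hb₀).mp (rnDeriv_smul_left_of_ne_top' μ (b • ν) ha)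
  filter_upwards [hleft, rnDeriv_smul_right_of_ne_top' μ ν hb₀ hb] with x hl hr
  simp only [hl, Pi.smul_apply, hr, smul_eq_mul, ← mul_assoc, div_eq_mul_inv]

lemma rnDeriv_prod_ae_eq_mul {μ₁ ν₁ : Measure X} {μ₂ ν₂ : Measure Y} [SigmaFinite μ₁]
    [SigmaFinite ν₁] [SigmaFinite μ₂] [SigmaFinite ν₂] (h₁ : μ₁ ≪ ν₁) (h₂ : μ₂ ≪ ν₂) :
    (μ₁.prod μ₂).rnDeriv (ν₁.prod ν₂)
      =ᵐ[ν₁.prod ν₂] fun z => μ₁.rnDeriv ν₁ z.1 * μ₂.rnDeriv ν₂ z.2 := by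
  conv_lhs => rw [← withDensity_rnDeriv_eq μ₁ ν₁ h₁, ← withDensity_rnDeriv_eq μ₂ ν₂ h₂,
    prod_withDensity (measurable_rnDeriv μ₁ ν₁) (measurable_rnDeriv μ₂ ν₂)]
  exact rnDeriv_withDensity _ (by fun_prop)

lemma smul_prod_smul (μ : Measure X) (ν : Measure Y) [SFinite ν] (a b : ℝ≥0∞) :
    (a • μ).prod (b • ν) = (a * b) • μ.prod ν := by
  rw [prod_smul_left, prod_smul_right, smul_smul]

lemma prod_univ_toReal (μ : Measure X) (ν : Measure Y) [SFinite ν] :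
    ((μ.prod ν) Set.univ).toReal = (μ Set.univ).toReal * (ν Set.univ).toReal := by
  rw [← Set.univ_prod_univ, prod_prod, ENNReal.toReal_mul]

end Measure

variable {X Y : Type*} [MeasurableSpace X] [MeasurableSpace Y]
  {μ₁ ν₁ : Measure X} {μ₂ ν₂ : Measure Y}

lemma log_rnDeriv_prod_ae_eq_add [SigmaFinite μ₁] [SigmaFinite ν₁] [SigmaFinite μ₂]
    [SigmaFinite ν₂] (h₁ : μ₁ ≪ ν₁) (h₂ : μ₂ ≪ ν₂) :
    (fun z => Real.log (((μ₁.prod μ₂).rnDeriv (ν₁.prod ν₂) z).toReal))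
      =ᵐ[μ₁.prod μ₂] fun z => Real.log ((μ₁.rnDeriv ν₁ z.1).toReal)
        + Real.log ((μ₂.rnDeriv ν₂ z.2).toReal) := by
  filter_upwards [(h₁.prod h₂).ae_le (Measure.rnDeriv_prod_ae_eq_mul h₁ h₂),
    Measure.quasiMeasurePreserving_fst.ae (Measure.toReal_rnDeriv_pos h₁),
    Measure.quasiMeasurePreserving_snd.ae (Measure.toReal_rnDeriv_pos h₂)] with z hz hpos₁ hpos₂
  rw [hz, ENNReal.toReal_mul, Real.log_mul hpos₁.ne' hpos₂.ne']

lemma integrable_log_rnDeriv_prod [IsFiniteMeasure μ₁] [SigmaFinite ν₁] [IsFiniteMeasure μ₂]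
    [SigmaFinite ν₂] (h₁ : μ₁ ≪ ν₁) (h₂ : μ₂ ≪ ν₂)
    (hint₁ : Integrable (fun x => Real.log ((μ₁.rnDeriv ν₁ x).toReal)) μ₁)
    (hint₂ : Integrable (fun y => Real.log ((μ₂.rnDeriv ν₂ y).toReal)) μ₂) :
    Integrable (fun z => Real.log (((μ₁.prod μ₂).rnDeriv (ν₁.prod ν₂) z).toReal))
      (μ₁.prod μ₂) :=
  ((hint₁.comp_fst μ₂).add (hint₂.comp_snd μ₁)).congr (log_rnDeriv_prod_ae_eq_add h₁ h₂).symm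

end MeasureTheory

lemma KLgen_smul_smul {X : Type*} [MeasurableSpace X] {μ ν : Measure X} [IsFiniteMeasure μ]
    [SigmaFinite ν] (hμν : μ ≪ ν)
    (hint : Integrable (fun x => Real.log ((μ.rnDeriv ν x).toReal)) μ)
    {c d : ℝ} (hc : 0 < c) (hd : 0 < d) :
    KLgen (ENNReal.ofReal c • μ) (ENNReal.ofReal d • ν)
      = c * KLgen μ ν + c * Real.log (c / d) * (μ Set.univ).toReal
        + (d - c) * (ν Set.univ).toReal := by
  have hlog : ∀ᵐ x ∂μ,
      Real.log (((ENNReal.ofReal c • μ).rnDeriv (ENNReal.ofReal d • ν) x).toReal)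
        = Real.log (c / d) + Real.log ((μ.rnDeriv ν x).toReal) := by
    filter_upwards [hμν.ae_le (Measure.rnDeriv_smul_smul (μ := μ) (ν := ν) ofReal_ne_top
        (ENNReal.ofReal_pos.mpr hd).ne' ofReal_ne_top), Measure.toReal_rnDeriv_pos hμν]
      with x hx hpos
    rw [hx, Pi.smul_apply, smul_eq_mul, ENNReal.toReal_mul, ENNReal.toReal_div,
      ENNReal.toReal_ofReal hc.le, ENNReal.toReal_ofReal hd.le,
      Real.log_mul (by positivity) hpos.ne']
  rw [KLgen, KLgen, integral_smul_measure, integral_congr_ae hlog,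
    integral_add (integrable_const _) hint, integral_const]
  simp only [Measure.smul_apply, smul_eq_mul, ENNReal.toReal_mul, ENNReal.toReal_ofReal hc.le,
    ENNReal.toReal_ofReal hd.le, measureReal_def]
  ring

theorem kl_tensor_square_scaled_general
    (k : ℕ) (α β : Measure (Fin k → ℝ))
    [IsFiniteMeasure α] [IsFiniteMeasure β]
    (hαβ : α ≪ β)
    (hint : Integrable (fun x => Real.log ((α.rnDeriv β x).toReal)) α)
    (t r : ℝ) (ht : 0 < t) (hr : 0 < r) :
    KLgen (((ENNReal.ofReal t) • α).prod ((ENNReal.ofReal t) • α))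
        (((ENNReal.ofReal r) • β).prod ((ENNReal.ofReal r) • β))
      = t ^ 2 * KLgen (α.prod α) (β.prod β)
        + t ^ 2 * Real.log (t ^ 2 / r ^ 2) * ((α Set.univ).toReal) ^ 2
        + (r ^ 2 - t ^ 2) * ((β Set.univ).toReal) ^ 2 := by
  rw [Measure.smul_prod_smul, Measure.smul_prod_smul, ← sq, ← sq, ← ENNReal.ofReal_pow ht.le,
    ← ENNReal.ofReal_pow hr.le,
    KLgen_smul_smul (hαβ.prod hαβ) (integrable_log_rnDeriv_prod hαβ hαβ hint hint)
      (by positivity) (by positivity),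
    Measure.prod_univ_toReal, Measure.prod_univ_toReal]
  ring

/-- for finite positive measures `α ≪ β` on `ℝ^k` with densities, finite KL
divergence and scalars `t, r > 0`, the quadratic KL divergence `KL⊗(α‖β) := KL(α⊗α ‖ β⊗β)`
satisfies `KL⊗(t·α ‖ r·β) = t² KL⊗(α‖β) + t² log(t²/r²) mα² + (r² - t²) mβ²`. -/
theorem kl_tensor_square_scaled
    (k : ℕ) (α β : Measure (Fin k → ℝ))
    [IsFiniteMeasure α] [IsFiniteMeasure β]
    (hαd : α ≪ (MeasureTheory.volume : Measure (Fin k → ℝ)))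
    (hβd : β ≪ (MeasureTheory.volume : Measure (Fin k → ℝ)))
    (hαβ : α ≪ β)
    (hint : Integrable (fun x => Real.log ((α.rnDeriv β x).toReal)) α)
    (t r : ℝ) (ht : 0 < t) (hr : 0 < r) :
    KLgen (((ENNReal.ofReal t) • α).prod ((ENNReal.ofReal t) • α))
        (((ENNReal.ofReal r) • β).prod ((ENNReal.ofReal r) • β))
      = t ^ 2 * KLgen (α.prod α) (β.prod β)
        + t ^ 2 * Real.log (t ^ 2 / r ^ 2) * ((α Set.univ).toReal) ^ 2
        + (r ^ 2 - t ^ 2) * ((β Set.univ).toReal) ^ 2 :=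
  kl_tensor_square_scaled_general k α β hαβ hint t r ht hr
end

section
/- Let a, b > 0, τ, ε > 0 and define, for x, y > 0, g_{ε,τ,−1}(x,y;a,b) := x² + y² + (τ+ε)(x/a + y/b − log(xy/(ab)) − 2), g_{ε,τ,1}(x,y;a,b) := g_{ε,τ,−1}(x,y;a,b) − 2(xy − ε/2) + ε(log(xy) − log(ε/2)), and g_{ε,τ,+}(x,y;a,b) := x² + y² + (τ+ε)(x/a + y/b − log(xy/(ab)) − 2) − 2[xy − ε/2]^+ + ε[log(xy) − log(ε/2)]^+. Let (x̃,ỹ) minimize g_{ε,τ,−1} over (0,∞)², let (x̂,ŷ) minimize g_{ε,τ,1} over (0,∞)², and let (x*,y*) minimize g_{ε,τ,+} over (0,∞)². Then: if x̃·ỹ < ε/2 then (x*,y*) = (x̃,ỹ), and otherwise (x*,y*) = (x̂,ŷ). -/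
open Set

private lemma log_mix {l m x1 x2 : ℝ} (hl : 0 < l) (hm : 0 < m) (hlm : l + m = 1)
    (h1 : 0 < x1) (h2 : 0 < x2) :
    l * Real.log x1 + m * Real.log x2 ≤ Real.log (l*x1 + m*x2) := by
  have := strictConcaveOn_log_Ioi.concaveOn.2 (mem_Ioi.2 h1) (mem_Ioi.2 h2) hl.le hm.le hlm
  simpa [smul_eq_mul] using this

private lemma log_mix_lt {l m x1 x2 : ℝ} (hl : 0 < l) (hm : 0 < m) (hlm : l + m = 1)
    (h1 : 0 < x1) (h2 : 0 < x2) (hne : x1 ≠ x2) :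
    l * Real.log x1 + m * Real.log x2 < Real.log (l*x1 + m*x2) := by
  have := strictConcaveOn_log_Ioi.2 (mem_Ioi.2 h1) (mem_Ioi.2 h2) hne hl hm hlm
  simpa [smul_eq_mul] using this

private lemma key_sconv (c d A B K : ℝ) (hc : 0 < c) (hd0 : 0 ≤ d) (hd2 : d ≤ 2)
    {x1 y1 x2 y2 l m : ℝ} (hx1 : 0 < x1) (hy1 : 0 < y1) (hx2 : 0 < x2) (hy2 : 0 < y2)
    (hl : 0 < l) (hm : 0 < m) (hlm : l + m = 1)
    (hne : x1 ≠ x2 ∨ y1 ≠ y2) :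
    (l*x1+m*x2)^2 + (l*y1+m*y2)^2 - d*((l*x1+m*x2)*(l*y1+m*y2))
      + A*(l*x1+m*x2) + B*(l*y1+m*y2)
      - c*Real.log (l*x1+m*x2) - c*Real.log (l*y1+m*y2) + K
    < l*(x1^2 + y1^2 - d*(x1*y1) + A*x1 + B*y1 - c*Real.log x1 - c*Real.log y1 + K)
      + m*(x2^2 + y2^2 - d*(x2*y2) + A*x2 + B*y2 - c*Real.log x2 - c*Real.log y2 + K) := by
  have hK : l*K + m*K = K := by rw [← add_mul, hlm, one_mul]
  have hquad : (l*x1+m*x2)^2 + (l*y1+m*y2)^2 - d*((l*x1+m*x2)*(l*y1+m*y2))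
      ≤ l*(x1^2 + y1^2 - d*(x1*y1)) + m*(x2^2 + y2^2 - d*(x2*y2)) := by
    have h1 : 0 ≤ l*m*(2-d)*((x1-x2)^2+(y1-y2)^2) :=
      mul_nonneg (mul_nonneg (mul_nonneg hl.le hm.le) (by linarith))
        (by positivity)
    have h2 : 0 ≤ l*m*d*((x1-x2)-(y1-y2))^2 :=
      mul_nonneg (mul_nonneg (mul_nonneg hl.le hm.le) hd0) (sq_nonneg _)
    have hm' : m = 1 - l := by linarith
    subst hm'
    nlinarith [h1, h2]
  rcases eq_or_ne x1 x2 with hx | hx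
  · have hy : y1 ≠ y2 := hne.resolve_left (by simp [hx])
    have Lx : c*(l * Real.log x1 + m * Real.log x2) ≤ c*Real.log (l*x1 + m*x2) :=
      mul_le_mul_of_nonneg_left (log_mix hl hm hlm hx1 hx2) hc.le
    have Ly : c*(l * Real.log y1 + m * Real.log y2) < c*Real.log (l*y1 + m*y2) :=
      mul_lt_mul_of_pos_left (log_mix_lt hl hm hlm hy1 hy2 hy) hc
    nlinarith [hquad, Lx, Ly, hK]
  · have Lx : c*(l * Real.log x1 + m * Real.log x2) < c*Real.log (l*x1 + m*x2) :=
      mul_lt_mul_of_pos_left (log_mix_lt hl hm hlm hx1 hx2 hx) hc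
    have Ly : c*(l * Real.log y1 + m * Real.log y2) ≤ c*Real.log (l*y1 + m*y2) :=
      mul_le_mul_of_nonneg_left (log_mix hl hm hlm hy1 hy2) hc.le
    nlinarith [hquad, Lx, Ly, hK]

private lemma mid_prod {x1 y1 x2 y2 e : ℝ} (hx1 : 0 < x1) (hy1 : 0 < y1)
    (hx2 : 0 < x2) (hy2 : 0 < y2) (he : 0 < e)
    (h1 : e/2 ≤ x1*y1) (h2 : e/2 ≤ x2*y2) :
    e/2 ≤ ((1/2)*x1+(1/2)*x2)*((1/2)*y1+(1/2)*y2) := by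
  have hs : 0 < x1*y2 + x2*y1 := by positivity
  have hp : (e/2)*(e/2) ≤ (x1*y2)*(x2*y1) := by
    calc (e/2)*(e/2) ≤ (x1*y1)*(x2*y2) := by
          apply mul_le_mul h1 h2 (by positivity) (by positivity)
      _ = (x1*y2)*(x2*y1) := by ring
  have hge : e ≤ x1*y2 + x2*y1 := by nlinarith [sq_nonneg (x1*y2 - x2*y1), hs, he]
  nlinarith [h1, h2, hge]

set_option maxHeartbeats 2000000 in
/-- comparison of the minimizers of `g_{ε,τ,-1}`, `g_{ε,τ,1}` and `g_{ε,τ,+}`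
over `(0,∞)²`: if `x̃·ỹ < ε/2` then the minimizer of `g_{ε,τ,+}` is `(x̃,ỹ)`
(the minimizer of `g_{ε,τ,-1}`), and otherwise it is `(x̂,ŷ)` (the minimizer of `g_{ε,τ,1}`). -/
theorem min_g_plus_cases
    (a b τ ε : ℝ) (ha : 0 < a) (hb : 0 < b) (hτ : 0 < τ) (hε : 0 < ε)
    (gm1 g1 gp : ℝ → ℝ → ℝ)
    (hgm1 : ∀ x y, gm1 x y = x ^ 2 + y ^ 2
      + (τ + ε) * (x / a + y / b - Real.log (x * y / (a * b)) - 2))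
    (hg1 : ∀ x y, g1 x y = gm1 x y - 2 * (x * y - ε / 2)
      + ε * (Real.log (x * y) - Real.log (ε / 2)))
    (hgp : ∀ x y, gp x y = x ^ 2 + y ^ 2
      + (τ + ε) * (x / a + y / b - Real.log (x * y / (a * b)) - 2)
      - 2 * max (x * y - ε / 2) 0
      + ε * max (Real.log (x * y) - Real.log (ε / 2)) 0)
    (xt yt : ℝ) (hxt : 0 < xt) (hyt : 0 < yt)
    (hmint : ∀ x y, 0 < x → 0 < y → gm1 xt yt ≤ gm1 x y)
    (xh yh : ℝ) (hxh : 0 < xh) (hyh : 0 < yh)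
    (hminh : ∀ x y, 0 < x → 0 < y → g1 xh yh ≤ g1 x y)
    (xs ys : ℝ) (hxs : 0 < xs) (hys : 0 < ys)
    (hmins : ∀ x y, 0 < x → 0 < y → gp xs ys ≤ gp x y) :
    (xt * yt < ε / 2 → (xs, ys) = (xt, yt))
    ∧ (¬ xt * yt < ε / 2 → (xs, ys) = (xh, yh)) := by
  have hab : (0:ℝ) < a*b := mul_pos ha hb
  have hc : (0:ℝ) < τ + ε := by linarith
  -- normal forms
  have hmN : ∀ x y, 0 < x → 0 < y → gm1 x y
      = x^2 + y^2 + ((τ+ε)/a)*x + ((τ+ε)/b)*y - (τ+ε)*Real.log x - (τ+ε)*Real.log y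
        + ((τ+ε)*Real.log a + (τ+ε)*Real.log b - 2*(τ+ε)) := by
    intro x y hx hy
    rw [hgm1]
    have hl : Real.log (x*y/(a*b)) = Real.log x + Real.log y - (Real.log a + Real.log b) := by
      rw [Real.log_div (by positivity) (by positivity), Real.log_mul hx.ne' hy.ne',
        Real.log_mul ha.ne' hb.ne']
    rw [hl]; ring
  have h1N : ∀ x y, 0 < x → 0 < y → g1 x y
      = x^2 + y^2 - 2*(x*y) + ((τ+ε)/a)*x + ((τ+ε)/b)*y - τ*Real.log x - τ*Real.log y
        + ((τ+ε)*Real.log a + (τ+ε)*Real.log b - 2*(τ+ε) + ε - ε*Real.log (ε/2)) := by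
    intro x y hx hy
    rw [hg1, hmN x y hx hy, Real.log_mul hx.ne' hy.ne']
    ring
  -- gp region formulas
  have hgp' : ∀ x y, gp x y = gm1 x y - 2*max (x*y - ε/2) 0
      + ε*max (Real.log (x*y) - Real.log (ε/2)) 0 := by
    intro x y; rw [hgp, hgm1]
  have hpEqm : ∀ x y, 0 < x → 0 < y → x*y ≤ ε/2 → gp x y = gm1 x y := by
    intro x y hx hy h
    have hxy : 0 < x*y := mul_pos hx hy
    have m1 : max (x*y - ε/2) 0 = 0 := max_eq_right (by linarith)
    have hlog : Real.log (x*y) ≤ Real.log (ε/2) := Real.log_le_log hxy h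
    have m2 : max (Real.log (x*y) - Real.log (ε/2)) 0 = 0 := max_eq_right (by linarith)
    rw [hgp' x y, m1, m2]; ring
  have hpEq1 : ∀ x y, 0 < x → 0 < y → ε/2 ≤ x*y → gp x y = g1 x y := by
    intro x y hx hy h
    have hlog : Real.log (ε/2) ≤ Real.log (x*y) := Real.log_le_log (by positivity) h
    have m1 : max (x*y - ε/2) 0 = x*y - ε/2 := max_eq_left (by linarith)
    have m2 : max (Real.log (x*y) - Real.log (ε/2)) 0
        = Real.log (x*y) - Real.log (ε/2) := max_eq_left (by linarith)
    rw [hgp' x y, m1, m2, hg1]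
  -- scalar inequalities
  have hφ : ∀ P : ℝ, 0 < P → ε*(Real.log P - Real.log (ε/2)) ≤ 2*(P - ε/2) := by
    intro P hP
    have ht : (0:ℝ) < P/(ε/2) := by positivity
    have h := Real.log_le_sub_one_of_pos ht
    rw [Real.log_div hP.ne' (by positivity)] at h
    have h2 := mul_le_mul_of_nonneg_left h hε.le
    have h3 : ε*(P/(ε/2) - 1) = 2*(P - ε/2) := by field_simp
    linarith
  have hφs : ∀ P : ℝ, 0 < P → P ≠ ε/2 → ε*(Real.log P - Real.log (ε/2)) < 2*(P - ε/2) := by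
    intro P hP hne
    have ht : (0:ℝ) < P/(ε/2) := by positivity
    have hne1 : P/(ε/2) ≠ 1 := by
      intro hcon
      exact hne ((div_eq_one_iff_eq (by positivity)).mp hcon)
    have h := Real.log_lt_sub_one_of_pos ht hne1
    rw [Real.log_div hP.ne' (by positivity)] at h
    have h2 := mul_lt_mul_of_pos_left h hε
    have h3 : ε*(P/(ε/2) - 1) = 2*(P - ε/2) := by field_simp
    linarith
  have h1lem : ∀ x y, 0 < x → 0 < y → g1 x y ≤ gm1 x y := by
    intro x y hx hy
    rw [hg1]
    have := hφ (x*y) (mul_pos hx hy)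
    linarith
  have h1lts : ∀ x y, 0 < x → 0 < y → x*y ≠ ε/2 → g1 x y < gm1 x y := by
    intro x y hx hy hne
    rw [hg1]
    have := hφs (x*y) (mul_pos hx hy) hne
    linarith
  have hplem : ∀ x y, 0 < x → 0 < y → gp x y ≤ gm1 x y := by
    intro x y hx hy
    rcases le_total (x*y) (ε/2) with h|h
    · rw [hpEqm x y hx hy h]
    · rw [hpEq1 x y hx hy h]; exact h1lem x y hx hy
  have hpgel : ∀ x y, 0 < x → 0 < y → g1 x y ≤ gp x y := by
    intro x y hx hy
    rcases le_total (x*y) (ε/2) with h|h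
    · rw [hpEqm x y hx hy h]; exact h1lem x y hx hy
    · rw [hpEq1 x y hx hy h]
  -- strict convexity
  have sconvm : ∀ x1 y1 x2 y2 l m : ℝ, 0<x1→0<y1→0<x2→0<y2→0<l→0< m→ l+m=1 →
      (x1 ≠ x2 ∨ y1 ≠ y2) →
      gm1 (l*x1+m*x2) (l*y1+m*y2) < l*gm1 x1 y1 + m*gm1 x2 y2 := by
    intro x1 y1 x2 y2 l m hx1 hy1 hx2 hy2 hl hm hlm hne
    have hmx : 0 < l*x1+m*x2 := by positivity
    have hmy : 0 < l*y1+m*y2 := by positivity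
    have key := key_sconv (τ+ε) 0 ((τ+ε)/a) ((τ+ε)/b)
        ((τ+ε)*Real.log a + (τ+ε)*Real.log b - 2*(τ+ε)) hc le_rfl (by norm_num)
        hx1 hy1 hx2 hy2 hl hm hlm hne
    rw [hmN _ _ hmx hmy, hmN _ _ hx1 hy1, hmN _ _ hx2 hy2]
    linarith [key]
  have sconv1 : ∀ x1 y1 x2 y2 l m : ℝ, 0<x1→0<y1→0<x2→0<y2→0<l→0< m→ l+m=1 →
      (x1 ≠ x2 ∨ y1 ≠ y2) →
      g1 (l*x1+m*x2) (l*y1+m*y2) < l*g1 x1 y1 + m*g1 x2 y2 := by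
    intro x1 y1 x2 y2 l m hx1 hy1 hx2 hy2 hl hm hlm hne
    have hmx : 0 < l*x1+m*x2 := by positivity
    have hmy : 0 < l*y1+m*y2 := by positivity
    have key := key_sconv τ 2 ((τ+ε)/a) ((τ+ε)/b)
        ((τ+ε)*Real.log a + (τ+ε)*Real.log b - 2*(τ+ε) + ε - ε*Real.log (ε/2)) hτ
        (by norm_num) le_rfl hx1 hy1 hx2 hy2 hl hm hlm hne
    rw [h1N _ _ hmx hmy, h1N _ _ hx1 hy1, h1N _ _ hx2 hy2]
    linarith [key]
  -- first-order conditions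
  have focxa : (τ+ε)/a = (τ+ε)/xt - 2*xt := by
    have hloc : IsLocalMin (fun x => gm1 x yt) xt :=
      IsMinOn.isLocalMin (isMinOn_iff.mpr (fun x hx => hmint x yt hx hyt)) (Ioi_mem_nhds hxt)
    have heq : (fun x => gm1 x yt) =ᶠ[nhds xt]
        (fun x => x^2 + yt^2 + ((τ+ε)/a)*x + ((τ+ε)/b)*yt - (τ+ε)*Real.log x
          - (τ+ε)*Real.log yt + ((τ+ε)*Real.log a + (τ+ε)*Real.log b - 2*(τ+ε))) := by
      filter_upwards [Ioi_mem_nhds hxt] with x hx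
      exact hmN x yt hx hyt
    have d1 : HasDerivAt (fun x : ℝ => x^2) (2*xt) xt := by
      simpa using hasDerivAt_pow 2 xt
    have d2 : HasDerivAt (fun x : ℝ => ((τ+ε)/a)*x) ((τ+ε)/a) xt := by
      simpa using (hasDerivAt_id xt).const_mul ((τ+ε)/a)
    have d3 : HasDerivAt (fun x : ℝ => (τ+ε)*Real.log x) ((τ+ε)*xt⁻¹) xt :=
      (Real.hasDerivAt_log hxt.ne').const_mul (τ+ε)
    have hder := ((((((d1.add_const (yt^2)).add d2).add_const
        (((τ+ε)/b)*yt)).sub d3).sub_const ((τ+ε)*Real.log yt)).add_const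
        ((τ+ε)*Real.log a + (τ+ε)*Real.log b - 2*(τ+ε)))
    have h0 := hloc.hasDerivAt_eq_zero (heq.hasDerivAt_iff.mpr hder)
    have hrw : (τ+ε)/xt = (τ+ε)*xt⁻¹ := div_eq_mul_inv _ _
    rw [hrw]; linarith [h0]
  have focyb : (τ+ε)/b = (τ+ε)/yt - 2*yt := by
    have hloc : IsLocalMin (fun y => gm1 xt y) yt :=
      IsMinOn.isLocalMin (isMinOn_iff.mpr (fun y hy => hmint xt y hxt hy)) (Ioi_mem_nhds hyt)
    have heq : (fun y => gm1 xt y) =ᶠ[nhds yt]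
        (fun y => xt^2 + y^2 + ((τ+ε)/a)*xt + ((τ+ε)/b)*y - (τ+ε)*Real.log xt
          - (τ+ε)*Real.log y + ((τ+ε)*Real.log a + (τ+ε)*Real.log b - 2*(τ+ε))) := by
      filter_upwards [Ioi_mem_nhds hyt] with y hy
      exact hmN xt y hxt hy
    have d1 : HasDerivAt (fun y : ℝ => xt^2 + y^2) (2*yt) yt := by
      simpa using (hasDerivAt_pow 2 yt).const_add (xt^2)
    have d2 : HasDerivAt (fun y : ℝ => ((τ+ε)/b)*y) ((τ+ε)/b) yt := by
      simpa using (hasDerivAt_id yt).const_mul ((τ+ε)/b)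
    have d3 : HasDerivAt (fun y : ℝ => (τ+ε)*Real.log y) ((τ+ε)*yt⁻¹) yt :=
      (Real.hasDerivAt_log hyt.ne').const_mul (τ+ε)
    have hder := (((((d1.add_const (((τ+ε)/a)*xt)).add d2).sub_const
        ((τ+ε)*Real.log xt)).sub d3).add_const
        ((τ+ε)*Real.log a + (τ+ε)*Real.log b - 2*(τ+ε)))
    have h0 := hloc.hasDerivAt_eq_zero (heq.hasDerivAt_iff.mpr hder)
    have hrw : (τ+ε)/yt = (τ+ε)*yt⁻¹ := div_eq_mul_inv _ _
    rw [hrw]; linarith [h0]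
  have R1 : (τ+ε)/xt - 2*xt = τ/xh - 2*xh + 2*yh := by
    have hloc : IsLocalMin (fun x => g1 x yh) xh :=
      IsMinOn.isLocalMin (isMinOn_iff.mpr (fun x hx => hminh x yh hx hyh)) (Ioi_mem_nhds hxh)
    have heq : (fun x => g1 x yh) =ᶠ[nhds xh]
        (fun x => x^2 + yh^2 - 2*(x*yh) + ((τ+ε)/a)*x + ((τ+ε)/b)*yh - τ*Real.log x
          - τ*Real.log yh
          + ((τ+ε)*Real.log a + (τ+ε)*Real.log b - 2*(τ+ε) + ε - ε*Real.log (ε/2))) := by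
      filter_upwards [Ioi_mem_nhds hxh] with x hx
      exact h1N x yh hx hyh
    have d1 : HasDerivAt (fun x : ℝ => x^2) (2*xh) xh := by
      simpa using hasDerivAt_pow 2 xh
    have dm : HasDerivAt (fun x : ℝ => 2*(x*yh)) (2*yh) xh := by
      simpa using ((hasDerivAt_id xh).mul_const yh).const_mul 2
    have d2 : HasDerivAt (fun x : ℝ => ((τ+ε)/a)*x) ((τ+ε)/a) xh := by
      simpa using (hasDerivAt_id xh).const_mul ((τ+ε)/a)
    have d3 : HasDerivAt (fun x : ℝ => τ*Real.log x) (τ*xh⁻¹) xh :=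
      (Real.hasDerivAt_log hxh.ne').const_mul τ
    have hder := (((((((d1.add_const (yh^2)).sub dm).add d2).add_const
        (((τ+ε)/b)*yh)).sub d3).sub_const (τ*Real.log yh)).add_const
        ((τ+ε)*Real.log a + (τ+ε)*Real.log b - 2*(τ+ε) + ε - ε*Real.log (ε/2)))
    have h0 := hloc.hasDerivAt_eq_zero (heq.hasDerivAt_iff.mpr hder)
    have hrw : τ/xh = τ*xh⁻¹ := div_eq_mul_inv _ _
    rw [← focxa, hrw]; linarith [h0]
  have R2 : (τ+ε)/yt - 2*yt = τ/yh - 2*yh + 2*xh := by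
    have hloc : IsLocalMin (fun y => g1 xh y) yh :=
      IsMinOn.isLocalMin (isMinOn_iff.mpr (fun y hy => hminh xh y hxh hy)) (Ioi_mem_nhds hyh)
    have heq : (fun y => g1 xh y) =ᶠ[nhds yh]
        (fun y => xh^2 + y^2 - 2*(xh*y) + ((τ+ε)/a)*xh + ((τ+ε)/b)*y - τ*Real.log xh
          - τ*Real.log y
          + ((τ+ε)*Real.log a + (τ+ε)*Real.log b - 2*(τ+ε) + ε - ε*Real.log (ε/2))) := by
      filter_upwards [Ioi_mem_nhds hyh] with y hy
      exact h1N xh y hxh hy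
    have d1 : HasDerivAt (fun y : ℝ => xh^2 + y^2) (2*yh) yh := by
      simpa using (hasDerivAt_pow 2 yh).const_add (xh^2)
    have dm : HasDerivAt (fun y : ℝ => 2*(xh*y)) (2*xh) yh := by
      simpa using ((hasDerivAt_id yh).const_mul xh).const_mul 2
    have d2 : HasDerivAt (fun y : ℝ => ((τ+ε)/b)*y) ((τ+ε)/b) yh := by
      simpa using (hasDerivAt_id yh).const_mul ((τ+ε)/b)
    have d3 : HasDerivAt (fun y : ℝ => τ*Real.log y) (τ*yh⁻¹) yh :=
      (Real.hasDerivAt_log hyh.ne').const_mul τ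
    have hder := ((((((d1.sub dm).add_const (((τ+ε)/a)*xh)).add d2).sub_const
        (τ*Real.log xh)).sub d3).add_const
        ((τ+ε)*Real.log a + (τ+ε)*Real.log b - 2*(τ+ε) + ε - ε*Real.log (ε/2)))
    have h0 := hloc.hasDerivAt_eq_zero (heq.hasDerivAt_iff.mpr hder)
    have hrw : τ/yh = τ*yh⁻¹ := div_eq_mul_inv _ _
    rw [← focyb, hrw]; linarith [h0]
  -- comparisons of coordinates via the strictly decreasing map s ↦ (τ+ε)/s - 2s
  have Qdiffx : (τ+ε)/xh - 2*xh - ((τ+ε)/xt - 2*xt) = (ε - 2*(xh*yh))/xh := by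
    rw [R1]; field_simp; ring
  have Qdiffy : (τ+ε)/yh - 2*yh - ((τ+ε)/yt - 2*yt) = (ε - 2*(xh*yh))/yh := by
    rw [R2]; field_simp; ring
  have Qstrict : ∀ s t : ℝ, 0 < s → 0 < t → s < t →
      (τ+ε)/t - 2*t < (τ+ε)/s - 2*s := by
    intro s t hs ht hst
    have : (τ+ε)/t < (τ+ε)/s := div_lt_div_of_pos_left hc hs hst
    linarith
  have cmpU : xh*yh < ε/2 → xh < xt ∧ yh < yt := by
    intro h
    have hpos1 : 0 < (ε - 2*(xh*yh))/xh := div_pos (by linarith) hxh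
    have hpos2 : 0 < (ε - 2*(xh*yh))/yh := div_pos (by linarith) hyh
    constructor
    · rcases lt_trichotomy xh xt with h'|h'|h'
      · exact h'
      · exfalso
        have hz : (ε - 2*(xh*yh))/xh = 0 := by rw [← Qdiffx, h']; ring
        linarith
      · exfalso; have := Qstrict xt xh hxt hxh h'; linarith
    · rcases lt_trichotomy yh yt with h'|h'|h'
      · exact h'
      · exfalso
        have hz : (ε - 2*(xh*yh))/yh = 0 := by rw [← Qdiffy, h']; ring
        linarith
      · exfalso; have := Qstrict yt yh hyt hyh h'; linarith
  have cmpU' : ε/2 < xh*yh → xt < xh ∧ yt < yh := by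
    intro h
    have hneg1 : (ε - 2*(xh*yh))/xh < 0 := div_neg_of_neg_of_pos (by linarith) hxh
    have hneg2 : (ε - 2*(xh*yh))/yh < 0 := div_neg_of_neg_of_pos (by linarith) hyh
    constructor
    · rcases lt_trichotomy xt xh with h'|h'|h'
      · exact h'
      · exfalso
        have hz : (ε - 2*(xh*yh))/xh = 0 := by rw [← Qdiffx, h']; ring
        linarith
      · exfalso; have := Qstrict xh xt hxh hxt h'; linarith
    · rcases lt_trichotomy yt yh with h'|h'|h'
      · exact h'
      · exfalso
        have hz : (ε - 2*(xh*yh))/yh = 0 := by rw [← Qdiffy, h']; ring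
        linarith
      · exfalso; have := Qstrict yh yt hyh hyt h'; linarith
  have cmpE : xh*yh = ε/2 → xh = xt ∧ yh = yt := by
    intro h
    have hz : ε - 2*(xh*yh) = 0 := by linarith
    rw [hz] at Qdiffx Qdiffy
    simp only [zero_div] at Qdiffx Qdiffy
    constructor
    · rcases lt_trichotomy xh xt with h'|h'|h'
      · exfalso; have := Qstrict xh xt hxh hxt h'; linarith
      · exact h'
      · exfalso; have := Qstrict xt xh hxt hxh h'; linarith
    · rcases lt_trichotomy yh yt with h'|h'|h'
      · exfalso; have := Qstrict yh yt hyh hyt h'; linarith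
      · exact h'
      · exfalso; have := Qstrict yt yh hyt hyh h'; linarith
  -- gradient inequality for g1 at the gm1-minimizer
  have grad : ∀ u v, 0 < u → 0 < v →
      g1 xt yt + (ε - 2*(xt*yt)) * (u/xt + v/yt - 2) ≤ g1 u v := by
    intro u v hu hv
    have l1 : τ*(Real.log u - Real.log xt) ≤ τ*(u/xt - 1) := by
      have h := Real.log_le_sub_one_of_pos (div_pos hu hxt)
      rw [Real.log_div hu.ne' hxt.ne'] at h
      exact mul_le_mul_of_nonneg_left h hτ.le
    have l2 : τ*(Real.log v - Real.log yt) ≤ τ*(v/yt - 1) := by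
      have h := Real.log_le_sub_one_of_pos (div_pos hv hyt)
      rw [Real.log_div hv.ne' hyt.ne'] at h
      exact mul_le_mul_of_nonneg_left h hτ.le
    rw [h1N u v hu hv, h1N xt yt hxt hyt, focxa, focyb]
    have hqid : (u^2 + v^2 - 2*(u*v) + ((τ+ε)/xt - 2*xt)*u + ((τ+ε)/yt - 2*yt)*v)
        - (xt^2 + yt^2 - 2*(xt*yt) + ((τ+ε)/xt - 2*xt)*xt + ((τ+ε)/yt - 2*yt)*yt)
        - (ε - 2*(xt*yt)) * (u/xt + v/yt - 2)
        - τ*(u/xt - 1) - τ*(v/yt - 1)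
        = (u - v - xt + yt)^2 := by
      field_simp
      ring
    linarith [hqid, l1, l2, sq_nonneg (u - v - xt + yt)]
  constructor
  · -- Case A : xt*yt < ε/2
    intro hP
    have claimA : xh*yh < ε/2 := by
      rcases lt_trichotomy (xh*yh) (ε/2) with h|h|h
      · exact h
      · obtain ⟨ex, ey⟩ := cmpE h
        rw [ex, ey] at h; linarith
      · exfalso
        obtain ⟨ltx, lty⟩ := cmpU' h
        have h1 : (1:ℝ) < xh/xt := (one_lt_div hxt).2 ltx
        have h2 : (1:ℝ) < yh/yt := (one_lt_div hyt).2 lty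
        have hg := grad xh yh hxh hyh
        have hmin := hminh xt yt hxt hyt
        have hprod := mul_pos (by linarith : (0:ℝ) < ε - 2*(xt*yt))
          (by linarith : (0:ℝ) < xh/xt + yh/yt - 2)
        linarith
    rcases le_or_gt (xs*ys) (ε/2) with hsle|hsgt
    · have e1 : gp xs ys = gm1 xs ys := hpEqm _ _ hxs hys hsle
      have e2 : gp xt yt = gm1 xt yt := hpEqm _ _ hxt hyt hP.le
      by_contra hnep
      have hne' : xs ≠ xt ∨ ys ≠ yt := by
        by_contra hcon
        push_neg at hcon
        exact hnep (by rw [hcon.1, hcon.2])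
      have hmid := sconvm xs ys xt yt (1/2) (1/2) hxs hys hxt hyt
        (by norm_num) (by norm_num) (by norm_num) hne'
      have hmx : 0 < (1/2)*xs + (1/2)*xt := by positivity
      have hmy : 0 < (1/2)*ys + (1/2)*yt := by positivity
      have hA := hmins _ _ hmx hmy
      have hB := hplem _ _ hmx hmy
      have hC := hmint xs ys hxs hys
      have hD := hmins xt yt hxt hyt
      linarith
    · exfalso
      have hf0 : ((1-(0:ℝ))*xh + 0*xs) * ((1-(0:ℝ))*yh + 0*ys) = xh*yh := by ring
      have hf1 : ((1-(1:ℝ))*xh + 1*xs) * ((1-(1:ℝ))*yh + 1*ys) = xs*ys := by ring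
      have hfc : ContinuousOn (fun t : ℝ => ((1-t)*xh + t*xs) * ((1-t)*yh + t*ys))
          (Set.Icc 0 1) := (by continuity : Continuous fun t : ℝ =>
            ((1-t)*xh + t*xs) * ((1-t)*yh + t*ys)).continuousOn
      have hmem : ε/2 ∈ Set.Icc (((1-(0:ℝ))*xh + 0*xs) * ((1-(0:ℝ))*yh + 0*ys))
          (((1-(1:ℝ))*xh + 1*xs) * ((1-(1:ℝ))*yh + 1*ys)) := by
        rw [hf0, hf1]
        exact ⟨claimA.le, hsgt.le⟩
      obtain ⟨t0, ht0mem, ht0⟩ := intermediate_value_Icc (by norm_num : (0:ℝ) ≤ 1) hfc hmem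
      have ht0' : ((1-t0)*xh + t0*xs) * ((1-t0)*yh + t0*ys) = ε/2 := ht0
      have ht0ne0 : t0 ≠ 0 := by
        intro hcon
        rw [hcon] at ht0'
        rw [hf0] at ht0'
        linarith
      have ht0ne1 : t0 ≠ 1 := by
        intro hcon
        rw [hcon] at ht0'
        rw [hf1] at ht0'
        linarith
      have h0lt : 0 < t0 := lt_of_le_of_ne ht0mem.1 (Ne.symm ht0ne0)
      have h1gt : t0 < 1 := lt_of_le_of_ne ht0mem.2 ht0ne1
      have hl : 0 < 1 - t0 := by linarith
      have hqx : 0 < (1-t0)*xh + t0*xs := by positivity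
      have hqy : 0 < (1-t0)*yh + t0*ys := by positivity
      have hne2 : xh ≠ xs ∨ yh ≠ ys := by
        by_contra hcon
        push_neg at hcon
        rw [hcon.1, hcon.2] at claimA
        linarith
      have hsc := sconv1 xh yh xs ys (1-t0) t0 hxh hyh hxs hys hl h0lt (by ring) hne2
      have e3 : gp ((1-t0)*xh+t0*xs) ((1-t0)*yh+t0*ys)
          = g1 ((1-t0)*xh+t0*xs) ((1-t0)*yh+t0*ys) :=
        hpEq1 _ _ hqx hqy (le_of_eq ht0'.symm)
      have e4 : gp xs ys = g1 xs ys := hpEq1 _ _ hxs hys hsgt.le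
      have h5 := hminh xs ys hxs hys
      have h6 := hmins _ _ hqx hqy
      have h7 := mul_le_mul_of_nonneg_left h5 hl.le
      have h8 : (1-t0)*(g1 xs ys) + t0*(g1 xs ys) = g1 xs ys := by ring
      linarith
  · -- Case B : ε/2 ≤ xt*yt
    intro hPn
    push_neg at hPn
    have claimB : ε/2 ≤ xh*yh := by
      by_contra hcon
      push_neg at hcon
      obtain ⟨ltx, lty⟩ := cmpU hcon
      have h1 : xh/xt < 1 := (div_lt_one hxt).2 ltx
      have h2 : yh/yt < 1 := (div_lt_one hyt).2 lty
      have hgr := grad xh yh hxh hyh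
      have hmin := hminh xt yt hxt hyt
      rcases eq_or_lt_of_le hPn with heqc|hlt
      · have hfac : ε - 2*(xt*yt) = 0 := by linarith
        rw [hfac] at hgr
        have heqg : g1 xh yh = g1 xt yt := le_antisymm hmin (by linarith)
        have hne3 : xh ≠ xt ∨ yh ≠ yt := Or.inl (ne_of_lt ltx)
        have hmid := sconv1 xh yh xt yt (1/2) (1/2) hxh hyh hxt hyt
          (by norm_num) (by norm_num) (by norm_num) hne3
        have hmx : 0 < (1/2)*xh + (1/2)*xt := by positivity
        have hmy : 0 < (1/2)*yh + (1/2)*yt := by positivity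
        have := hminh _ _ hmx hmy
        linarith
      · have hprod := mul_pos (by linarith : (0:ℝ) < 2*(xt*yt) - ε)
          (by linarith : (0:ℝ) < 2 - (xh/xt + yh/yt))
        linarith
    have eh : gp xh yh = g1 xh yh := hpEq1 _ _ hxh hyh claimB
    have hglob : ∀ x y, 0 < x → 0 < y → gp xh yh ≤ gp x y := by
      intro x y hx hy
      calc gp xh yh = g1 xh yh := eh
        _ ≤ g1 x y := hminh x y hx hy
        _ ≤ gp x y := hpgel x y hx hy
    have heq1 : gp xs ys = gp xh yh :=
      le_antisymm (hmins _ _ hxh hyh) (hglob _ _ hxs hys)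
    have heqg1 : g1 xs ys = g1 xh yh := by
      have h1 := hpgel _ _ hxs hys
      have h2 := hminh xs ys hxs hys
      linarith
    rcases lt_or_ge (xs*ys) (ε/2) with hlt|hge
    · exfalso
      have e5 : gp xs ys = gm1 xs ys := hpEqm _ _ hxs hys hlt.le
      have e6 : g1 xs ys < gm1 xs ys := h1lts _ _ hxs hys (ne_of_lt hlt)
      linarith
    · by_contra hnep
      have hne4 : xs ≠ xh ∨ ys ≠ yh := by
        by_contra hcon
        push_neg at hcon
        exact hnep (by rw [hcon.1, hcon.2])
      have hmid := sconv1 xs ys xh yh (1/2) (1/2) hxs hys hxh hyh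
        (by norm_num) (by norm_num) (by norm_num) hne4
      have hmx : 0 < (1/2)*xs + (1/2)*xh := by positivity
      have hmy : 0 < (1/2)*ys + (1/2)*yh := by positivity
      have hmp : ε/2 ≤ ((1/2)*xs+(1/2)*xh)*((1/2)*ys+(1/2)*yh) :=
        mid_prod hxs hys hxh hyh hε hge claimB
      have e7 := hpEq1 _ _ hmx hmy hmp
      have h8 := hglob _ _ hmx hmy
      linarith
end

section
/- Let a, b > 0, τ, ε > 0 and define g(x,y) := x² + y² + ε(log(xy) − log(ε/2)) − 2(xy − ε/2) + (τ+ε)(x/a + y/b − log(xy/(ab)) − 2) for x, y > 0. Then the cubic equation τ z³ + (8τ − (τ+ε)²/(ab)) z² + (16τ − 2(τ+ε)²(1/a + 1/b)²) z − 4(τ+ε)²(1/a + 1/b)² = 0 has a unique positive root ẑ, and g attains its minimum over (0,∞)² at (x̂,ŷ) with x̂ = −(τ+ε)/(4a) + (1/2)·√((τ+ε)²/(4a²) + 4τ(1/2 + 1/ẑ)) and ŷ = −(τ+ε)/(4b) + (1/2)·√((τ+ε)²/(4b²) + 4τ(1/2 + 1/ẑ)). -/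
lemma quad_unique' (γ u X Y : ℝ) (hγ : 0 < γ) (hX : 0 < X) (hY : 0 < Y)
    (h1 : 2*X^2 + γ*X = u) (h2 : 2*Y^2 + γ*Y = u) : X = Y := by
  have h3 : (X - Y) * (2*X + 2*Y + γ) = 0 := by linear_combination h1 - h2
  rcases mul_eq_zero.mp h3 with h | h
  · linarith
  · nlinarith

lemma sqrt_spec (c τ e z w : ℝ) (hc : 0 < c) (hτ : 0 < τ) (he : 0 < e) (hz : 0 < z)
    (hw : w = -c / (4*e) + (1/2) * Real.sqrt (c^2/(4*e^2) + 4*τ*(1/2 + 1/z))) :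
    0 < w ∧ 2*w^2 + (c/e)*w = τ + 2*τ/z := by
  have h1 : (0:ℝ) < 4*τ*(1/2 + 1/z) := by positivity
  have h2 : (c/(2*e))^2 < c^2/(4*e^2) + 4*τ*(1/2+1/z) := by
    have : (c/(2*e))^2 = c^2/(4*e^2) := by ring
    linarith
  have h3 : c/(2*e) < Real.sqrt (c^2/(4*e^2) + 4*τ*(1/2+1/z)) :=
    (Real.lt_sqrt (by positivity)).mpr h2
  have hw0 : 0 < w := by
    rw [hw]
    have h4 : -c/(4*e) + (1/2)*(c/(2*e)) = 0 := by ring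
    nlinarith
  refine ⟨hw0, ?_⟩
  have hsq : Real.sqrt (c^2/(4*e^2) + 4*τ*(1/2+1/z)) ^ 2 = c^2/(4*e^2) + 4*τ*(1/2+1/z) :=
    Real.sq_sqrt (by positivity)
  have h5 : Real.sqrt (c^2/(4*e^2) + 4*τ*(1/2+1/z)) = 2*w + c/(2*e) := by
    rw [hw]; ring
  rw [h5] at hsq
  linear_combination (1/2) * hsq

lemma cubic_pos_root (τ B C D : ℝ) (hτ : 0 < τ) (hD : 0 < D) :
    ∃ z : ℝ, 0 < z ∧ τ*z^3 + B*z^2 + C*z - D = 0 := by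
  set f : ℝ → ℝ := fun z => τ*z^3 + B*z^2 + C*z - D with hf
  set M := max 1 ((|B|+|C|+D+1)/τ) with hM
  have hcont : ContinuousOn f (Set.Icc 0 M) := by
    apply Continuous.continuousOn; fun_prop
  have hM1 : (1:ℝ) ≤ M := le_max_left _ _
  have hM2 : (|B|+|C|+D+1)/τ ≤ M := le_max_right _ _
  have hM3 : |B|+|C|+D+1 ≤ τ*M := by
    rw [div_le_iff₀ hτ] at hM2; linarith [hM2]
  have hf0 : f 0 < 0 := by simp [hf]; linarith
  have hMsq : (1:ℝ) ≤ M^2 := by nlinarith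
  have hfM : 0 < f M := by
    have hB : -|B| ≤ B := neg_abs_le B
    have hC : -|C| ≤ C := neg_abs_le C
    have hD2 : D ≤ D*M^2 := by nlinarith
    have h1 : (|B|+|C|+D+1)*M^2 ≤ τ*M*M^2 := by nlinarith
    have hM0 : (0:ℝ) < M := by linarith
    have h2 : (-|C|)*M^2 ≤ C*M := by
      nlinarith [mul_nonneg (by linarith : (0:ℝ) ≤ C + |C|) hM0.le,
        mul_nonneg (abs_nonneg C) (by nlinarith : (0:ℝ) ≤ M^2 - M)]
    have h3 : (-|B|)*M^2 ≤ B*M^2 := by nlinarith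
    have h4 : M^2 ≤ τ*M^3 + B*M^2 + C*M - D := by nlinarith
    have : f M = τ*M^3 + B*M^2 + C*M - D := by simp [hf]
    nlinarith
  have hsub := intermediate_value_Ioo (le_trans zero_le_one hM1) hcont
  have h0mem : (0:ℝ) ∈ Set.Ioo (f 0) (f M) := ⟨hf0, hfM⟩
  obtain ⟨z, hzmem, hzeq⟩ := hsub h0mem
  exact ⟨z, hzmem.1, by simpa [hf] using hzeq⟩

lemma bridge (τ α β z x y : ℝ) (hτ : 0 < τ) (hα : 0 < α) (hβ : 0 < β)
    (hz : 0 < z) (hx : 0 < x) (hy : 0 < y)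
    (hqx : 2*x^2 + α*x = τ + 2*τ/z) (hqy : 2*y^2 + β*y = τ + 2*τ/z) :
    (τ*z^3 + (8*τ - α*β)*z^2 + (16*τ - 2*(α+β)^2)*z - 4*(α+β)^2 = 0 ↔ x*y = τ/z) := by
  have hz' : z ≠ 0 := ne_of_gt hz
  obtain ⟨u, hu⟩ : ∃ u : ℝ, u = τ + 2*τ/z := ⟨_, rfl⟩
  obtain ⟨P, hP⟩ : ∃ P : ℝ, P = τ/z := ⟨_, rfl⟩
  obtain ⟨T, hT⟩ : ∃ T : ℝ, T = τ*z^3 + (8*τ - α*β)*z^2 + (16*τ - 2*(α+β)^2)*z - 4*(α+β)^2 :=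
    ⟨_, rfl⟩
  rw [← hu] at hqx hqy
  rw [← hP, ← hT]
  have hP0 : 0 < P := by rw [hP]; positivity
  have hu0 : 0 < u := by rw [hu]; positivity
  have hnum : u^2 - 4*P^2 = τ^2*(z+4)/z := by rw [hu, hP]; field_simp; ring
  have hnum0 : 0 < u^2 - 4*P^2 := by rw [hnum]; positivity
  have hdα : 0 < 2*β*P + u*α := by positivity
  have hdβ : 0 < 2*α*P + u*β := by positivity
  obtain ⟨X0, hX0⟩ : ∃ X0 : ℝ, X0 = (u^2 - 4*P^2)/(2*β*P + u*α) := ⟨_, rfl⟩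
  obtain ⟨Y0, hY0⟩ : ∃ Y0 : ℝ, Y0 = (u^2 - 4*P^2)/(2*α*P + u*β) := ⟨_, rfl⟩
  have hX00 : 0 < X0 := hX0 ▸ div_pos hnum0 hdα
  have hY00 : 0 < Y0 := hY0 ▸ div_pos hnum0 hdβ
  have idA : (2*X0^2 + α*X0 - u) * ((2*β*P + u*α)^2 * z^3) = 2*τ^3 * T := by
    rw [hX0, hu, hP, hT]; field_simp; ring
  have idB : (2*Y0^2 + β*Y0 - u) * ((2*α*P + u*β)^2 * z^3) = 2*τ^3 * T := by
    rw [hY0, hu, hP, hT]; field_simp; ring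
  have idC : (X0*Y0 - P) * ((2*β*P + u*α) * (2*α*P + u*β) * z^3) = τ^3 * T := by
    rw [hX0, hY0, hu, hP, hT]; field_simp; ring
  constructor
  · intro hroot
    rw [hroot, mul_zero] at idA idB idC
    have hA : 2*X0^2 + α*X0 = u := by
      rcases mul_eq_zero.mp idA with h | h
      · linear_combination h
      · exact absurd h (ne_of_gt (by positivity))
    have hB : 2*Y0^2 + β*Y0 = u := by
      rcases mul_eq_zero.mp idB with h | h
      · linear_combination h
      · exact absurd h (ne_of_gt (by positivity))
    have hC : X0*Y0 = P := by
      rcases mul_eq_zero.mp idC with h | h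
      · linear_combination h
      · exact absurd h (ne_of_gt (by positivity))
    have hxX : x = X0 := quad_unique' α u x X0 hα hx hX00 hqx hA
    have hyY : y = Y0 := quad_unique' β u y Y0 hβ hy hY00 hqy hB
    rw [hxX, hyY, hC]
  · intro hxy
    have h1 : 2*P^2 + β*P*x = u*x^2 := by
      linear_combination x^2*hqy - (2*P + 2*x*y + β*x)*hxy
    have h2 : x*(2*β*P + u*α) = u^2 - 4*P^2 := by
      linear_combination 2*h1 + u*hqx
    have hxX : x = X0 := by
      rw [hX0, eq_div_iff hdα.ne']; linear_combination h2
    have h5 : (2*x^2 + α*x - u) * ((2*β*P + u*α)^2 * z^3) = 2*τ^3 * T := by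
      rw [hxX]; exact idA
    have h6 : 2*x^2 + α*x - u = 0 := by linear_combination hqx
    rw [h6, zero_mul] at h5
    rcases mul_eq_zero.mp h5.symm with h | h
    · exact absurd h (ne_of_gt (by positivity))
    · exact h

lemma gmin_aux (a b τ ε : ℝ) (ha : 0 < a) (hb : 0 < b) (hτ : 0 < τ) (hε : 0 < ε)
    (g : ℝ → ℝ → ℝ)
    (hg : ∀ x y, g x y = x ^ 2 + y ^ 2 + ε * (Real.log (x * y) - Real.log (ε / 2))
      - 2 * (x * y - ε / 2)
      + (τ + ε) * (x / a + y / b - Real.log (x * y / (a * b)) - 2))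
    (x y : ℝ) (hx : 0 < x) (hy : 0 < y)
    (hstx : 2*x^2 - 2*x*y + ((τ+ε)/a)*x = τ) (hsty : 2*y^2 - 2*x*y + ((τ+ε)/b)*y = τ)
    (p q : ℝ) (hp : 0 < p) (hq : 0 < q) :
    g x y ≤ g p q ∧ ((p ≠ x ∨ q ≠ y) → g x y < g p q) := by
  have hid : x*y*(g p q - g x y) = x*y*((p-q)-(x-y))^2
      + τ*y*((p-x) - x*(Real.log p - Real.log x))
      + τ*x*((q-y) - y*(Real.log q - Real.log y)) := by
    rw [hg p q, hg x y,
      Real.log_div (mul_pos hp hq).ne' (mul_pos ha hb).ne',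
      Real.log_div (mul_pos hx hy).ne' (mul_pos ha hb).ne',
      Real.log_mul hp.ne' hq.ne', Real.log_mul hx.ne' hy.ne']
    linear_combination (y*(p-x))*hstx + (x*(q-y))*hsty
  have hlogp : (p-x) - x*(Real.log p - Real.log x) ≥ 0 := by
    have h1 : Real.log (p/x) ≤ p/x - 1 := Real.log_le_sub_one_of_pos (div_pos hp hx)
    rw [Real.log_div hp.ne' hx.ne'] at h1
    have h2 : x * (Real.log p - Real.log x) ≤ x * (p/x - 1) :=
      mul_le_mul_of_nonneg_left h1 hx.le
    have h3 : x * (p/x - 1) = p - x := by field_simp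
    linarith
  have hlogq : (q-y) - y*(Real.log q - Real.log y) ≥ 0 := by
    have h1 : Real.log (q/y) ≤ q/y - 1 := Real.log_le_sub_one_of_pos (div_pos hq hy)
    rw [Real.log_div hq.ne' hy.ne'] at h1
    have h2 : y * (Real.log q - Real.log y) ≤ y * (q/y - 1) :=
      mul_le_mul_of_nonneg_left h1 hy.le
    have h3 : y * (q/y - 1) = q - y := by field_simp
    linarith
  have hxy : 0 < x*y := mul_pos hx hy
  constructor
  · have h5 : 0 ≤ x*y*(g p q - g x y) := by
      rw [hid]
      have t1 : 0 ≤ x*y*((p-q)-(x-y))^2 := by positivity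
      have t2 : 0 ≤ τ*y*((p-x) - x*(Real.log p - Real.log x)) :=
        mul_nonneg (by positivity) hlogp
      have t3 : 0 ≤ τ*x*((q-y) - y*(Real.log q - Real.log y)) :=
        mul_nonneg (by positivity) hlogq
      linarith
    nlinarith [h5]
  · intro hne
    have hstrict : 0 < τ*y*((p-x) - x*(Real.log p - Real.log x))
        + τ*x*((q-y) - y*(Real.log q - Real.log y)) := by
      rcases hne with hne | hne
      · have h1 : Real.log (p/x) < p/x - 1 := by
          apply Real.log_lt_sub_one_of_pos (div_pos hp hx)
          intro hcon
          exact hne (by field_simp at hcon; linarith)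
        rw [Real.log_div hp.ne' hx.ne'] at h1
        have h2 : x * (Real.log p - Real.log x) < x * (p/x - 1) :=
          mul_lt_mul_of_pos_left h1 hx
        have h3 : x * (p/x - 1) = p - x := by field_simp
        have h4 : 0 < (p-x) - x*(Real.log p - Real.log x) := by linarith
        nlinarith [mul_pos hτ hy, mul_pos hτ hx]
      · have h1 : Real.log (q/y) < q/y - 1 := by
          apply Real.log_lt_sub_one_of_pos (div_pos hq hy)
          intro hcon
          exact hne (by field_simp at hcon; linarith)
        rw [Real.log_div hq.ne' hy.ne'] at h1
        have h2 : y * (Real.log q - Real.log y) < y * (q/y - 1) :=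
          mul_lt_mul_of_pos_left h1 hy
        have h3 : y * (q/y - 1) = q - y := by field_simp
        have h4 : 0 < (q-y) - y*(Real.log q - Real.log y) := by linarith
        nlinarith [mul_pos hτ hy, mul_pos hτ hx]
    have h5 : 0 < x*y*(g p q - g x y) := by
      rw [hid]
      have t1 : 0 ≤ x*y*((p-q)-(x-y))^2 := by positivity
      linarith
    nlinarith [h5]

/-- for `a, b, τ, ε > 0`, the cubic
`τ z³ + (8τ - (τ+ε)²/(ab)) z² + (16τ - 2(τ+ε)²(1/a+1/b)²) z - 4(τ+ε)²(1/a+1/b)² = 0`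
has a unique positive root `ẑ`, and the function
`g(x,y) = x² + y² + ε(log(xy) - log(ε/2)) - 2(xy - ε/2) + (τ+ε)(x/a + y/b - log(xy/(ab)) - 2)`
attains its minimum over `(0,∞)²` at `(x̂, ŷ)` given by the explicit formulas in terms of `ẑ`. -/
theorem min_g_plus_one
    (a b τ ε : ℝ) (ha : 0 < a) (hb : 0 < b) (hτ : 0 < τ) (hε : 0 < ε)
    (g : ℝ → ℝ → ℝ)
    (hg : ∀ x y, g x y = x ^ 2 + y ^ 2 + ε * (Real.log (x * y) - Real.log (ε / 2))
      - 2 * (x * y - ε / 2)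
      + (τ + ε) * (x / a + y / b - Real.log (x * y / (a * b)) - 2))
    (t : ℝ → ℝ)
    (ht : ∀ z, t z = τ * z ^ 3 + (8 * τ - (τ + ε) ^ 2 / (a * b)) * z ^ 2
      + (16 * τ - 2 * (τ + ε) ^ 2 * (1 / a + 1 / b) ^ 2) * z
      - 4 * (τ + ε) ^ 2 * (1 / a + 1 / b) ^ 2) :
    ∃ zhat : ℝ, (0 < zhat ∧ t zhat = 0 ∧ ∀ z, 0 < z → t z = 0 → z = zhat) ∧
      ∀ xhat yhat : ℝ,
        xhat = -(τ + ε) / (4 * a)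
          + (1 / 2) * Real.sqrt ((τ + ε) ^ 2 / (4 * a ^ 2) + 4 * τ * (1 / 2 + 1 / zhat)) →
        yhat = -(τ + ε) / (4 * b)
          + (1 / 2) * Real.sqrt ((τ + ε) ^ 2 / (4 * b ^ 2) + 4 * τ * (1 / 2 + 1 / zhat)) →
        (0 < xhat ∧ 0 < yhat) ∧ ∀ x y, 0 < x → 0 < y → g xhat yhat ≤ g x y := by
  have hc : 0 < τ + ε := by linarith
  have hα : 0 < (τ+ε)/a := by positivity
  have hβ : 0 < (τ+ε)/b := by positivity
  -- rewrite t in α,β form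
  have htz : ∀ z, t z = τ*z^3 + (8*τ - ((τ+ε)/a)*((τ+ε)/b))*z^2
      + (16*τ - 2*((τ+ε)/a + (τ+ε)/b)^2)*z - 4*((τ+ε)/a + (τ+ε)/b)^2 := by
    intro z
    rw [ht z]
    field_simp
  -- existence of a positive root
  obtain ⟨z0, hz0, hroot0⟩ := cubic_pos_root τ (8*τ - ((τ+ε)/a)*((τ+ε)/b))
    (16*τ - 2*((τ+ε)/a + (τ+ε)/b)^2) (4*((τ+ε)/a + (τ+ε)/b)^2) hτ (by positivity)
  have htz0 : t z0 = 0 := by rw [htz z0]; linarith [hroot0]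
  -- machinery: for any positive root z, the hat point is a strict global min
  have key : ∀ z : ℝ, 0 < z → t z = 0 →
      ∀ x y : ℝ,
      x = -(τ + ε) / (4 * a)
        + (1 / 2) * Real.sqrt ((τ + ε) ^ 2 / (4 * a ^ 2) + 4 * τ * (1 / 2 + 1 / z)) →
      y = -(τ + ε) / (4 * b)
        + (1 / 2) * Real.sqrt ((τ + ε) ^ 2 / (4 * b ^ 2) + 4 * τ * (1 / 2 + 1 / z)) →
      (0 < x ∧ 0 < y) ∧ x*y = τ/z ∧
        ∀ p q : ℝ, 0 < p → 0 < q → (g x y ≤ g p q ∧ ((p ≠ x ∨ q ≠ y) → g x y < g p q)) := by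
    intro z hz hzr x y hxf hyf
    obtain ⟨hx0, hqx⟩ := sqrt_spec (τ+ε) τ a z x hc hτ ha hz hxf
    obtain ⟨hy0, hqy⟩ := sqrt_spec (τ+ε) τ b z y hc hτ hb hz hyf
    have hbr := bridge τ ((τ+ε)/a) ((τ+ε)/b) z x y hτ hα hβ hz hx0 hy0 hqx hqy
    have hprod : x*y = τ/z := by
      apply hbr.mp
      rw [htz z] at hzr
      linarith [hzr]
    have hstx : 2*x^2 - 2*x*y + ((τ+ε)/a)*x = τ := by
      have h2 : x*y = τ/z := hprod
      have h3 : 2*τ/z = 2*(x*y) := by rw [h2]; ring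
      linarith [hqx, h3]
    have hsty : 2*y^2 - 2*x*y + ((τ+ε)/b)*y = τ := by
      have h3 : 2*τ/z = 2*(x*y) := by rw [hprod]; ring
      linarith [hqy, h3]
    exact ⟨⟨hx0, hy0⟩, hprod, fun p q hp hq =>
      gmin_aux a b τ ε ha hb hτ hε g hg x y hx0 hy0 hstx hsty p q hp hq⟩
  refine ⟨z0, ⟨hz0, htz0, ?_⟩, ?_⟩
  · -- uniqueness
    intro z hz hzr
    obtain ⟨x1, hx1f⟩ : ∃ x1 : ℝ, x1 = -(τ + ε) / (4 * a)
        + (1 / 2) * Real.sqrt ((τ + ε) ^ 2 / (4 * a ^ 2) + 4 * τ * (1 / 2 + 1 / z)) := ⟨_, rfl⟩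
    obtain ⟨y1, hy1f⟩ : ∃ y1 : ℝ, y1 = -(τ + ε) / (4 * b)
        + (1 / 2) * Real.sqrt ((τ + ε) ^ 2 / (4 * b ^ 2) + 4 * τ * (1 / 2 + 1 / z)) := ⟨_, rfl⟩
    obtain ⟨x2, hx2f⟩ : ∃ x2 : ℝ, x2 = -(τ + ε) / (4 * a)
        + (1 / 2) * Real.sqrt ((τ + ε) ^ 2 / (4 * a ^ 2) + 4 * τ * (1 / 2 + 1 / z0)) := ⟨_, rfl⟩
    obtain ⟨y2, hy2f⟩ : ∃ y2 : ℝ, y2 = -(τ + ε) / (4 * b)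
        + (1 / 2) * Real.sqrt ((τ + ε) ^ 2 / (4 * b ^ 2) + 4 * τ * (1 / 2 + 1 / z0)) := ⟨_, rfl⟩
    obtain ⟨⟨hx10, hy10⟩, hprod1, hmin1⟩ := key z hz hzr x1 y1 hx1f hy1f
    obtain ⟨⟨hx20, hy20⟩, hprod2, hmin2⟩ := key z0 hz0 htz0 x2 y2 hx2f hy2f
    have hxeq : x1 = x2 := by
      by_contra hne
      have h1 := (hmin1 x2 y2 hx20 hy20).2 (Or.inl (fun h => hne h.symm))
      have h2 := (hmin2 x1 y1 hx10 hy10).1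
      linarith
    have hyeq : y1 = y2 := by
      by_contra hne
      have h1 := (hmin1 x2 y2 hx20 hy20).2 (Or.inr (fun h => hne h.symm))
      have h2 := (hmin2 x1 y1 hx10 hy10).1
      linarith
    have hpp : τ/z = τ/z0 := by rw [← hprod1, ← hprod2, hxeq, hyeq]
    field_simp at hpp
    linarith
  · -- minimality
    intro xhat yhat hxh hyh
    obtain ⟨⟨hx0, hy0⟩, _, hmin⟩ := key z0 hz0 htz0 xhat yhat hxh hyh
    exact ⟨⟨hx0, hy0⟩, fun x y hx hy => (hmin x y hx hy).1⟩
end
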